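/- arXiv:1104.0829 — 7 statements merged into one kernel-verified Lean document; each statement's English description precedes it below -/
import Mathlib

section
/- With notation as in the geodesic flow (u,v) for Christoffel symbols Γ on U' ⊆ ℝⁿ: for x ∈ U' and t in the domain J(x,0), one has u(t,x,0) = x and v(t,x,0) = 0, and the first derivatives with respect to the initial data (x,w) in direction (ξ,η) ∈ ℝⁿ × ℝⁿ are u'(t,x,0)·(ξ,η) = ξ + tη and v'(t,x,0)·(ξ,η) = η. -/
/-!
The constant curve is the geodesic with zero initial velocity; this gives `u(t,x,0) = x`,
`v(t,x,0) = 0`, and, along the line `(x + σξ, 0)`, the derivative in the direction `(ξ,0)`.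
Geodesics are homogeneous: `τ ↦ (u(στ,x,η), σ v(στ,x,η))` is the geodesic with initial data
`(x, ση)`, so differentiating at `σ = 0` gives `tη` and `η` in the direction `(0,η)`.
The derivative exists because the flow is smooth on its domain and that domain is a
neighbourhood of `(t,x,0)`: by Picard–Lindelöf, geodesics with small initial data exist for a
uniform time, and rescaling them reaches time `t` from every nearby point `(y,w)`.
-/

open Set Metric Filter Topology

theorem ContDiffAt.exists_forall_mem_closedBall_exists_eq_forall_mem_Ioo_mem_hasDerivAt
    {E : Type*} [NormedAddCommGroup E] [NormedSpace ℝ E] [CompleteSpace E]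
    {f : E → E} {x₀ : E} {s : Set E} (hf : ContDiffAt ℝ 1 f x₀) (hs : s ∈ 𝓝 x₀) :
    ∃ r > (0 : ℝ), ∃ ε > (0 : ℝ), ∀ x ∈ closedBall x₀ r, ∃ α : ℝ → E, α 0 = x ∧
      ∀ t ∈ Ioo (-ε) ε, α t ∈ s ∧ HasDerivAt α (f (α t)) t := by
  obtain ⟨ε, hε, a, r, L, K, hr, hpl⟩ := IsPicardLindelof.of_contDiffAt_one hf
  -- The solutions stay in `s` for a uniform time because the local flow is jointly continuous.
  obtain ⟨α, hα, hcont⟩ := (hpl 0).exists_forall_mem_closedBall_eq_hasDerivWithinAt_continuousOn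
  have hdom : closedBall x₀ r ×ˢ Icc (0 - ε) (0 + ε) ∈ 𝓝 (x₀, (0 : ℝ)) :=
    prod_mem_nhds (closedBall_mem_nhds _ hr) (Icc_mem_nhds (by linarith) (by linarith))
  have hα₀ : α (x₀, 0) = x₀ := (hα x₀ (mem_closedBall_self hr.le)).1
  obtain ⟨δ, hδ, hball⟩ := Metric.mem_nhds_iff.1
    ((hcont.continuousAt hdom).preimage_mem_nhds (hα₀ ▸ hs))
  refine ⟨min r (δ / 2), by positivity, min ε δ, by positivity, fun x hx ↦
    ⟨fun t ↦ α (x, t), (hα x (closedBall_subset_closedBall (min_le_left _ _) hx)).1,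
      fun t ht ↦ ⟨hball ?_, ?_⟩⟩⟩
  · rw [← ball_prod_same]
    refine ⟨(mem_closedBall.1 hx).trans_lt ?_, ?_⟩
    · exact (min_le_right _ _).trans_lt (half_lt_self hδ)
    · rw [mem_ball, Real.dist_eq, sub_zero, abs_lt]
      exact ⟨(neg_le_neg (min_le_right _ _)).trans_lt ht.1, ht.2.trans_le (min_le_right _ _)⟩
  · have ht' : t ∈ Ioo (0 - ε) (0 + ε) := by
      rw [zero_sub, zero_add]
      exact ⟨(neg_le_neg (min_le_left _ _)).trans_lt ht.1, ht.2.trans_le (min_le_left _ _)⟩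
    exact ((hα x (closedBall_subset_closedBall (min_le_left _ _) hx)).2 t
      (Ioo_subset_Icc_self ht')).hasDerivAt (Icc_mem_nhds ht'.1 ht'.2)

variable {E : Type*} [NormedAddCommGroup E] [NormedSpace ℝ E]

noncomputable def geodesicSpray (Γ : E → E →L[ℝ] E →L[ℝ] E) (p : E × E) : E × E :=
  (p.2, -(Γ p.1 p.2 p.2))

theorem contDiffAt_geodesicSpray {Γ : E → E →L[ℝ] E →L[ℝ] E} {x : E}
    (hΓ : ContDiffAt ℝ 1 Γ x) (w : E) : ContDiffAt ℝ 1 (geodesicSpray Γ) (x, w) :=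
  contDiffAt_snd.prodMk
    (((hΓ.comp (x, w) contDiffAt_fst).clm_apply contDiffAt_snd).clm_apply contDiffAt_snd).neg

def IsGeodesicOn (Γ : E → E →L[ℝ] E →L[ℝ] E) (U' : Set E) (I : Set ℝ) (u₁ v₁ : ℝ → E) :
    Prop :=
  ∀ t ∈ I, u₁ t ∈ U' ∧ HasDerivAt u₁ (v₁ t) t ∧ HasDerivAt v₁ (-(Γ (u₁ t) (v₁ t) (v₁ t))) t

section

variable {Γ : E → E →L[ℝ] E →L[ℝ] E} {U' : Set E}

theorem isGeodesicOn_const {y : E} (hy : y ∈ U') :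
    IsGeodesicOn Γ U' univ (fun _ ↦ y) (fun _ ↦ 0) := fun t _ ↦
  ⟨hy, hasDerivAt_const t y, by simpa using hasDerivAt_const t (0 : E)⟩

theorem IsGeodesicOn.comp_mul {I : Set ℝ} {u₁ v₁ : ℝ → E} (h : IsGeodesicOn Γ U' I u₁ v₁)
    (s : ℝ) :
    IsGeodesicOn Γ U' ((s * ·) ⁻¹' I) (fun τ ↦ u₁ (s * τ)) (fun τ ↦ s • v₁ (s * τ)) := by
  intro τ hτ
  obtain ⟨hmem, hu, hv⟩ := h (s * τ) hτ
  have hs : HasDerivAt (s * ·) s τ := by simpa using (hasDerivAt_id τ).const_mul s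
  refine ⟨hmem, hu.scomp τ hs, ?_⟩
  convert (hv.scomp τ hs).const_smul s using 1
  · rfl
  · simp only [map_smul, smul_apply, smul_smul, smul_neg]

theorem isGeodesicOn_of_hasDerivAt_geodesicSpray {I : Set ℝ} {α : ℝ → E × E}
    (h : ∀ t ∈ I, (α t).1 ∈ U' ∧ HasDerivAt α (geodesicSpray Γ (α t)) t) :
    IsGeodesicOn Γ U' I (fun t ↦ (α t).1) (fun t ↦ (α t).2) := fun t ht ↦
  ⟨(h t ht).1, (h t ht).2.fst, (h t ht).2.snd⟩

theorem exists_isGeodesicOn_Ioo [CompleteSpace E] {x : E} (hΓ : ContDiffAt ℝ 1 Γ x)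
    (hU' : U' ∈ 𝓝 x) :
    ∃ r > (0 : ℝ), ∃ ε > (0 : ℝ), ∀ p ∈ closedBall (x, (0 : E)) r, ∃ u₁ v₁ : ℝ → E,
      u₁ 0 = p.1 ∧ v₁ 0 = p.2 ∧ IsGeodesicOn Γ U' (Ioo (-ε) ε) u₁ v₁ := by
  obtain ⟨r, hr, ε, hε, hsol⟩ :=
    ContDiffAt.exists_forall_mem_closedBall_exists_eq_forall_mem_Ioo_mem_hasDerivAt
      (contDiffAt_geodesicSpray hΓ 0) (prod_mem_nhds hU' univ_mem)
  refine ⟨r, hr, ε, hε, fun p hp ↦ ?_⟩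
  obtain ⟨α, hα₀, hα⟩ := hsol p hp
  exact ⟨_, _, congrArg Prod.fst hα₀, congrArg Prod.snd hα₀,
    isGeodesicOn_of_hasDerivAt_geodesicSpray fun t ht ↦ ⟨(hα t ht).1.1, (hα t ht).2⟩⟩

end

def IsMaximalGeodesicFlow (Γ : E → E →L[ℝ] E →L[ℝ] E) (U' : Set E) (J : E → E → Set ℝ)
    (u v : ℝ → E → E → E) : Prop :=
  ∀ x ∈ U', ∀ w : E, ∀ (I : Set ℝ) (u₁ v₁ : ℝ → E),
    IsOpen I → I.OrdConnected → 0 ∈ I → u₁ 0 = x → v₁ 0 = w → IsGeodesicOn Γ U' I u₁ v₁ →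
      I ⊆ J x w ∧ ∀ t ∈ I, u₁ t = u t x w ∧ v₁ t = v t x w

namespace IsMaximalGeodesicFlow

variable {Γ : E → E →L[ℝ] E →L[ℝ] E} {U' : Set E} {J : E → E → Set ℝ} {u v : ℝ → E → E → E}

theorem zero_velocity (hflow : IsMaximalGeodesicFlow Γ U' J u v) {y : E} (hy : y ∈ U')
    (t : ℝ) : t ∈ J y 0 ∧ u t y 0 = y ∧ v t y 0 = 0 := by
  obtain ⟨hJ, heq⟩ := hflow y hy 0 univ _ _ isOpen_univ ordConnected_univ (mem_univ 0) rfl rfl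
    (isGeodesicOn_const hy)
  exact ⟨hJ (mem_univ t), (heq t (mem_univ t)).1.symm, (heq t (mem_univ t)).2.symm⟩

theorem smul_velocity (hflow : IsMaximalGeodesicFlow Γ U' J u v) {ε : ℝ} {u₁ v₁ : ℝ → E}
    (hg : IsGeodesicOn Γ U' (Ioo (-ε) ε) u₁ v₁) {s τ : ℝ} (hτ : s * τ ∈ Ioo (-ε) ε) :
    τ ∈ J (u₁ 0) (s • v₁ 0) ∧ u τ (u₁ 0) (s • v₁ 0) = u₁ (s * τ) ∧
      v τ (u₁ 0) (s • v₁ 0) = s • v₁ (s * τ) := by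
  have h₀ : (0 : ℝ) ∈ Ioo (-ε) ε := ⟨by linarith [hτ.1, hτ.2], by linarith [hτ.1, hτ.2]⟩
  have hI₀ : (0 : ℝ) ∈ (s * ·) ⁻¹' Ioo (-ε) ε := by simpa using h₀
  have hIo : IsOpen ((s * ·) ⁻¹' Ioo (-ε) ε) := isOpen_Ioo.preimage (continuous_const_mul s)
  have hIc : ((s * ·) ⁻¹' Ioo (-ε) ε).OrdConnected := by
    rcases le_total 0 s with hs | hs
    · exact ordConnected_Ioo.preimage_mono (monotone_mul_left_of_nonneg hs)
    · exact ordConnected_Ioo.preimage_anti (antitone_mul_left hs)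
  obtain ⟨hJ, heq⟩ := hflow (u₁ 0) (hg 0 h₀).1 (s • v₁ 0) _ _ _ hIo hIc hI₀
    (by simp) (by simp) (hg.comp_mul s)
  exact ⟨hJ hτ, (heq τ hτ).1.symm, (heq τ hτ).2.symm⟩

theorem domain_mem_nhds [CompleteSpace E] (hflow : IsMaximalGeodesicFlow Γ U' J u v) {x : E}
    (hΓ : ContDiffAt ℝ 1 Γ x) (hU' : U' ∈ 𝓝 x) (t : ℝ) :
    {p : ℝ × E × E | p.2.1 ∈ U' ∧ p.1 ∈ J p.2.1 p.2.2} ∈ 𝓝 (t, x, 0) := by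
  obtain ⟨r, hr, ε, hε, hgeo⟩ := exists_isGeodesicOn_Ioo hΓ hU'
  -- Time `τ` from velocity `w` is time `c * τ` from velocity `c⁻¹ • w`.
  set c := ε / (|t| + 1)
  have hc : 0 < c := by positivity
  have htime : ∀ᶠ τ in 𝓝 t, c * τ ∈ Ioo (-ε) ε := by
    refine (continuous_const_mul c).continuousAt.preimage_mem_nhds (isOpen_Ioo.mem_nhds ?_)
    rw [mem_Ioo, ← abs_lt, abs_mul, abs_of_pos hc, div_mul_eq_mul_div,
      div_lt_iff₀ (by positivity)]
    nlinarith [abs_nonneg t]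
  have hstate : ∀ᶠ q : E × E in 𝓝 (x, 0), (q.1, c⁻¹ • q.2) ∈ closedBall (x, (0 : E)) r := by
    refine (by fun_prop : Continuous fun q : E × E ↦ (q.1, c⁻¹ • q.2)).continuousAt
      |>.preimage_mem_nhds ?_
    simpa using closedBall_mem_nhds (x, (0 : E)) hr
  filter_upwards [htime.prod_nhds hstate] with ⟨τ, y, w⟩ ⟨hτ, hq⟩
  obtain ⟨u₁, v₁, hu₁, hv₁, hg⟩ := hgeo _ hq
  have hτJ := (hflow.smul_velocity hg hτ).1
  rw [hu₁, hv₁, smul_inv_smul₀ hc.ne'] at hτJ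
  exact ⟨hu₁ ▸ (hg 0 ⟨by linarith, hε⟩).1, hτJ⟩

theorem hasLineDerivAt_position (hflow : IsMaximalGeodesicFlow Γ U' J u v) {x : E}
    (hU' : U' ∈ 𝓝 x) (t : ℝ) (ξ : E) :
    HasLineDerivAt ℝ (fun q : E × E ↦ u t q.1 q.2) ξ (x, 0) (ξ, 0) ∧
      HasLineDerivAt ℝ (fun q : E × E ↦ v t q.1 q.2) 0 (x, 0) (ξ, 0) := by
  have hline : ∀ᶠ σ : ℝ in 𝓝 0, x + σ • ξ ∈ U' :=
    (by fun_prop : Continuous fun σ : ℝ ↦ x + σ • ξ).continuousAt.preimage_mem_nhds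
      (by simpa using hU')
  have hmk (σ : ℝ) : (x, (0 : E)) + σ • (ξ, (0 : E)) = (x + σ • ξ, 0) := by simp
  constructor
  · refine HasDerivAt.congr_of_eventuallyEq (f := fun σ : ℝ ↦ x + σ • ξ) ?_ ?_
    · simpa using ((hasDerivAt_id (0 : ℝ)).smul_const ξ).const_add x
    · filter_upwards [hline] with σ hσ
      simp only [hmk]
      exact (hflow.zero_velocity hσ t).2.1
  · refine (hasDerivAt_const (0 : ℝ) (0 : E)).congr_of_eventuallyEq ?_
    filter_upwards [hline] with σ hσ
    simp only [hmk]
    exact (hflow.zero_velocity hσ t).2.2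

theorem hasLineDerivAt_velocity [CompleteSpace E] (hflow : IsMaximalGeodesicFlow Γ U' J u v)
    {x : E} (hΓ : ContDiffAt ℝ 1 Γ x) (hU' : U' ∈ 𝓝 x) (t : ℝ) (η : E) :
    HasLineDerivAt ℝ (fun q : E × E ↦ u t q.1 q.2) (t • η) (x, 0) (0, η) ∧
      HasLineDerivAt ℝ (fun q : E × E ↦ v t q.1 q.2) η (x, 0) (0, η) := by
  obtain ⟨r, hr, ε, hε, hgeo⟩ := exists_isGeodesicOn_Ioo hΓ hU'
  -- Line derivatives scale with the direction, so a small multiple `c • η` of `η` suffices.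
  have hsmall : ∀ᶠ c : ℝ in 𝓝 0, (x, c • η) ∈ closedBall (x, (0 : E)) r :=
    (by fun_prop : Continuous fun c : ℝ ↦ (x, c • η)).continuousAt.preimage_mem_nhds
      (by simpa using closedBall_mem_nhds (x, (0 : E)) hr)
  obtain ⟨c, hcη, hc⟩ : ∃ c : ℝ, (x, c • η) ∈ closedBall (x, (0 : E)) r ∧ c ≠ 0 :=
    ((hsmall.filter_mono nhdsWithin_le_nhds).and (self_mem_nhdsWithin (s := {0}ᶜ))).exists
  obtain ⟨u₁, v₁, hu₁, hv₁, hg⟩ := hgeo _ hcη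
  have h₀ : (0 : ℝ) ∈ Ioo (-ε) ε := ⟨by linarith, hε⟩
  have htime : ∀ᶠ σ : ℝ in 𝓝 0, σ * t ∈ Ioo (-ε) ε :=
    (continuous_mul_const t).continuousAt.preimage_mem_nhds
      (isOpen_Ioo.mem_nhds (by simpa using h₀))
  have hmk (σ : ℝ) : (x, (0 : E)) + σ • ((0 : E), c • η) = (u₁ 0, σ • v₁ 0) := by
    simp [hu₁, hv₁]
  have hlin : HasDerivAt (· * t) t (0 : ℝ) := by simpa using (hasDerivAt_id (0 : ℝ)).mul_const t
  suffices key : HasLineDerivAt ℝ (fun q : E × E ↦ u t q.1 q.2) (c • t • η) (x, 0) (0, c • η) ∧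
      HasLineDerivAt ℝ (fun q : E × E ↦ v t q.1 q.2) (c • η) (x, 0) (0, c • η) by
    rwa [show ((0 : E), c • η) = c • ((0 : E), η) by simp, hasLineDerivAt_smul_iff hc,
      hasLineDerivAt_smul_iff hc] at key
  rw [smul_comm c t]
  constructor
  · refine HasDerivAt.congr_of_eventuallyEq (f := fun σ : ℝ ↦ u₁ (σ * t)) ?_ ?_
    · exact ((hg 0 h₀).2.1.scomp_of_eq 0 hlin (by simp)).congr_deriv (by simp [hv₁])
    · filter_upwards [htime] with σ hσ
      simp only [hmk]
      exact (hflow.smul_velocity hg hσ).2.1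
  · refine HasDerivAt.congr_of_eventuallyEq (f := fun σ : ℝ ↦ σ • v₁ (σ * t)) ?_ ?_
    · exact ((hasDerivAt_id (0 : ℝ)).smul
        ((hg 0 h₀).2.2.scomp_of_eq 0 hlin (by simp))).congr_deriv (by simp [hv₁])
    · filter_upwards [htime] with σ hσ
      simp only [hmk]
      exact (hflow.smul_velocity hg hσ).2.2

end IsMaximalGeodesicFlow

theorem geodesic_flow_first_derivatives_general
    {n : ℕ} (U' : Set (EuclideanSpace ℝ (Fin n))) (hU' : IsOpen U')
    (Γ : EuclideanSpace ℝ (Fin n) →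
      EuclideanSpace ℝ (Fin n) →L[ℝ] EuclideanSpace ℝ (Fin n) →L[ℝ] EuclideanSpace ℝ (Fin n))
    (hΓ : ContDiffOn ℝ (⊤ : ℕ∞) Γ U')
    (J : EuclideanSpace ℝ (Fin n) → EuclideanSpace ℝ (Fin n) → Set ℝ)
    (u v : ℝ → EuclideanSpace ℝ (Fin n) → EuclideanSpace ℝ (Fin n) → EuclideanSpace ℝ (Fin n))
    (hmax : ∀ x ∈ U', ∀ w : EuclideanSpace ℝ (Fin n), ∀ (I : Set ℝ)
      (u₁ v₁ : ℝ → EuclideanSpace ℝ (Fin n)),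
      IsOpen I → I.OrdConnected → 0 ∈ I → u₁ 0 = x → v₁ 0 = w →
      (∀ t ∈ I, u₁ t ∈ U' ∧ HasDerivAt u₁ (v₁ t) t ∧
        HasDerivAt v₁ (-(Γ (u₁ t) (v₁ t) (v₁ t))) t) →
      I ⊆ J x w ∧ ∀ t ∈ I, u₁ t = u t x w ∧ v₁ t = v t x w)
    -- `(u,v)` is smooth on its (open) domain of definition
    (hsmooth : ContDiffOn ℝ (⊤ : ℕ∞)
      (fun p : ℝ × EuclideanSpace ℝ (Fin n) × EuclideanSpace ℝ (Fin n) =>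
        (u p.1 p.2.1 p.2.2, v p.1 p.2.1 p.2.2))
      {p : ℝ × EuclideanSpace ℝ (Fin n) × EuclideanSpace ℝ (Fin n) |
        p.2.1 ∈ U' ∧ p.1 ∈ J p.2.1 p.2.2}) :
    ∀ x ∈ U', ∀ t ∈ J x 0,
      u t x 0 = x ∧ v t x 0 = 0 ∧
      ∀ ξ η : EuclideanSpace ℝ (Fin n),
        fderiv ℝ (fun q : EuclideanSpace ℝ (Fin n) × EuclideanSpace ℝ (Fin n) =>
          u t q.1 q.2) (x, 0) (ξ, η) = ξ + t • η ∧
        fderiv ℝ (fun q : EuclideanSpace ℝ (Fin n) × EuclideanSpace ℝ (Fin n) =>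
          v t q.1 q.2) (x, 0) (ξ, η) = η := by
  intro x hx t _
  have hflow : IsMaximalGeodesicFlow Γ U' J u v := hmax
  have hU'x : U' ∈ 𝓝 x := hU'.mem_nhds hx
  have hΓx : ContDiffAt ℝ 1 Γ x := (hΓ.contDiffAt hU'x).of_le (by simp)
  have hdiff : DifferentiableAt ℝ (fun q ↦ (u t q.1 q.2, v t q.1 q.2)) (x, 0) :=
    ((hsmooth.contDiffAt (hflow.domain_mem_nhds hΓx hU'x t)).differentiableAt (by simp)).comp
      (x, 0) (by fun_prop)
  obtain ⟨-, hux, hvx⟩ := hflow.zero_velocity hx t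
  refine ⟨hux, hvx, fun ξ η ↦ ?_⟩
  obtain ⟨huξ, hvξ⟩ := hflow.hasLineDerivAt_position hU'x t ξ
  obtain ⟨huη, hvη⟩ := hflow.hasLineDerivAt_velocity hΓx hU'x t η
  have hsplit : (ξ, η) = (ξ, 0) + (0, η) := by simp
  rw [hsplit, map_add, map_add, (hdiff.fst.hasFDerivAt.hasLineDerivAt _).unique huξ,
    (hdiff.fst.hasFDerivAt.hasLineDerivAt _).unique huη,
    (hdiff.snd.hasFDerivAt.hasLineDerivAt _).unique hvξ,
    (hdiff.snd.hasFDerivAt.hasLineDerivAt _).unique hvη, zero_add]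
  exact ⟨rfl, rfl⟩

/-- For the geodesic flow `(u,v)` of smooth Christoffel symbols `Γ` on an open
`U' ⊆ ℝⁿ`: for `x ∈ U'` and `t ∈ J(x,0)` one has `u(t,x,0) = x`, `v(t,x,0) = 0`, and the first
derivatives with respect to the initial data `(x,w)` in direction `(ξ,η)` are
`u'(t,x,0)·(ξ,η) = ξ + t·η` and `v'(t,x,0)·(ξ,η) = η`. -/
theorem geodesic_flow_first_derivatives
    {n : ℕ} (U' : Set (EuclideanSpace ℝ (Fin n))) (hU' : IsOpen U')
    (Γ : EuclideanSpace ℝ (Fin n) →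
      EuclideanSpace ℝ (Fin n) →L[ℝ] EuclideanSpace ℝ (Fin n) →L[ℝ] EuclideanSpace ℝ (Fin n))
    (hΓ : ContDiffOn ℝ (⊤ : ℕ∞) Γ U')
    (J : EuclideanSpace ℝ (Fin n) → EuclideanSpace ℝ (Fin n) → Set ℝ)
    (u v : ℝ → EuclideanSpace ℝ (Fin n) → EuclideanSpace ℝ (Fin n) → EuclideanSpace ℝ (Fin n))
    (hJ : ∀ x ∈ U', ∀ w : EuclideanSpace ℝ (Fin n),
      0 ∈ J x w ∧ IsOpen (J x w) ∧ (J x w).OrdConnected)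
    (hinit : ∀ x ∈ U', ∀ w : EuclideanSpace ℝ (Fin n), u 0 x w = x ∧ v 0 x w = w)
    (hsol : ∀ x ∈ U', ∀ w : EuclideanSpace ℝ (Fin n), ∀ t ∈ J x w,
      u t x w ∈ U' ∧ HasDerivAt (fun τ => u τ x w) (v t x w) t ∧
      HasDerivAt (fun τ => v τ x w) (-(Γ (u t x w) (v t x w) (v t x w))) t)
    (hmax : ∀ x ∈ U', ∀ w : EuclideanSpace ℝ (Fin n), ∀ (I : Set ℝ)
      (u₁ v₁ : ℝ → EuclideanSpace ℝ (Fin n)),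
      IsOpen I → I.OrdConnected → 0 ∈ I → u₁ 0 = x → v₁ 0 = w →
      (∀ t ∈ I, u₁ t ∈ U' ∧ HasDerivAt u₁ (v₁ t) t ∧
        HasDerivAt v₁ (-(Γ (u₁ t) (v₁ t) (v₁ t))) t) →
      I ⊆ J x w ∧ ∀ t ∈ I, u₁ t = u t x w ∧ v₁ t = v t x w)
    -- `(u,v)` is smooth on its (open) domain of definition
    (hsmooth : ContDiffOn ℝ (⊤ : ℕ∞)
      (fun p : ℝ × EuclideanSpace ℝ (Fin n) × EuclideanSpace ℝ (Fin n) =>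
        (u p.1 p.2.1 p.2.2, v p.1 p.2.1 p.2.2))
      {p : ℝ × EuclideanSpace ℝ (Fin n) × EuclideanSpace ℝ (Fin n) |
        p.2.1 ∈ U' ∧ p.1 ∈ J p.2.1 p.2.2}) :
    ∀ x ∈ U', ∀ t ∈ J x 0,
      u t x 0 = x ∧ v t x 0 = 0 ∧
      ∀ ξ η : EuclideanSpace ℝ (Fin n),
        fderiv ℝ (fun q : EuclideanSpace ℝ (Fin n) × EuclideanSpace ℝ (Fin n) =>
          u t q.1 q.2) (x, 0) (ξ, η) = ξ + t • η ∧
        fderiv ℝ (fun q : EuclideanSpace ℝ (Fin n) × EuclideanSpace ℝ (Fin n) =>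
          v t q.1 q.2) (x, 0) (ξ, η) = η :=
  geodesic_flow_first_derivatives_general U' hU' Γ hΓ J u v hmax hsmooth
end

section
/- With w(x,y) the initial-velocity map of the geodesic endpoint inverse as above, the second derivative of w at a diagonal point satisfies w''(x,x)·((ξ₁,η₁),(ξ₂,η₂)) = (1/2)·(Γ(x)(η₁−ξ₁, η₂−ξ₂) + Γ(x)(η₂−ξ₂, η₁−ξ₁)) for all ξᵢ, ηᵢ ∈ ℝⁿ. -/
/-!
Write `u(y, v) = u1 y v`, `w(y, z) = wmap y z` and `H(y, z) = (y, w(y, z))`, so that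
`u ∘ H = snd` on `V × V`. Differentiating once and using `Du(x, 0)(ξ, η) = ξ + η` gives
`Dw(x, x)(ξ, η) = η - ξ`. Differentiating twice, the second-order chain rule
`D²(u ∘ H) = D²u(DH ·, DH ·) + Du(D²H)` with `D²H = (0, D²w)` gives
`0 = D²u(x, 0)((ξ₁, η₁ - ξ₁), (ξ₂, η₂ - ξ₂)) + D²w(x, x)((ξ₁, η₁), (ξ₂, η₂))`.
-/

open Filter Topology ContinuousLinearMap

section SecondOrderCalculus

variable {𝕜 : Type*} [NontriviallyNormedField 𝕜]
  {E F G : Type*} [NormedAddCommGroup E] [NormedSpace 𝕜 E] [NormedAddCommGroup F]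
  [NormedSpace 𝕜 F] [NormedAddCommGroup G] [NormedSpace 𝕜 G]

theorem ContDiffAt.eventually_differentiableAt {n : WithTop ℕ∞} {f : E → F} {p : E}
    (hf : ContDiffAt 𝕜 n f p) (hn : 1 ≤ n) : ∀ᶠ q in 𝓝 p, DifferentiableAt 𝕜 f q :=
  ((hf.of_le hn).eventually (by simp)).mono fun _ hq => hq.differentiableAt one_ne_zero

theorem ContDiffAt.hasFDerivAt_fderiv {n : WithTop ℕ∞} {f : E → F} {p : E}
    (hf : ContDiffAt 𝕜 n f p) (hn : 2 ≤ n) :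
    HasFDerivAt (fderiv 𝕜 f) (fderiv 𝕜 (fderiv 𝕜 f) p) p :=
  ((hf.fderiv_right (m := 1) hn).differentiableAt one_ne_zero).hasFDerivAt

theorem fderiv_fderiv_comp_apply {g : F → G} {f : E → F} {p : E}
    (hg : ContDiffAt 𝕜 2 g (f p)) (hf : ContDiffAt 𝕜 2 f p) (a b : E) :
    fderiv 𝕜 (fderiv 𝕜 (g ∘ f)) p a b =
      fderiv 𝕜 (fderiv 𝕜 g) (f p) (fderiv 𝕜 f p a) (fderiv 𝕜 f p b) +
        fderiv 𝕜 g (f p) (fderiv 𝕜 (fderiv 𝕜 f) p a b) := by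
  have hgf : ∀ᶠ q in 𝓝 p, DifferentiableAt 𝕜 g (f q) :=
    hf.continuousAt.eventually (hg.eventually_differentiableAt one_le_two)
  have hD : fderiv 𝕜 (g ∘ f) =ᶠ[𝓝 p] fun q => (fderiv 𝕜 g (f q)).comp (fderiv 𝕜 f q) := by
    filter_upwards [hgf, hf.eventually_differentiableAt one_le_two] with q hgq hfq
    exact fderiv_comp q hgq hfq
  have hDg : HasFDerivAt (fun q => fderiv 𝕜 g (f q))
      ((fderiv 𝕜 (fderiv 𝕜 g) (f p)).comp (fderiv 𝕜 f p)) p :=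
    (hg.hasFDerivAt_fderiv le_rfl).comp p (hf.differentiableAt two_ne_zero).hasFDerivAt
  rw [hD.fderiv_eq, (hDg.clm_comp (hf.hasFDerivAt_fderiv le_rfl)).fderiv]
  simp [add_comm]

theorem fderiv_fderiv_prodMk_apply {f₁ : E → F} {f₂ : E → G} {p : E}
    (hf₁ : ContDiffAt 𝕜 2 f₁ p) (hf₂ : ContDiffAt 𝕜 2 f₂ p) (a b : E) :
    fderiv 𝕜 (fderiv 𝕜 fun q => (f₁ q, f₂ q)) p a b =
      (fderiv 𝕜 (fderiv 𝕜 f₁) p a b, fderiv 𝕜 (fderiv 𝕜 f₂) p a b) := by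
  have hD : (fderiv 𝕜 fun q => (f₁ q, f₂ q)) =ᶠ[𝓝 p]
      prodL 𝕜 ∘ fun q => (fderiv 𝕜 f₁ q, fderiv 𝕜 f₂ q) := by
    filter_upwards [hf₁.eventually_differentiableAt one_le_two,
      hf₂.eventually_differentiableAt one_le_two] with q h₁ h₂
    exact h₁.fderiv_prodMk h₂
  have hprod := (prodL (E := E) (F := F) (G := G) 𝕜).hasFDerivAt.comp p
    ((hf₁.hasFDerivAt_fderiv le_rfl).prodMk (hf₂.hasFDerivAt_fderiv le_rfl))
  rw [hD.fderiv_eq, hprod.fderiv]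
  simp

section RightInverseAlongGraph

variable {u : E × F → G} {w : E × G → F} {p : E × G}

theorem fderiv_graph_apply (hw : DifferentiableAt 𝕜 w p) (a : E × G) :
    fderiv 𝕜 (fun q => (q.1, w q)) p a = (a.1, fderiv 𝕜 w p a) := by
  rw [differentiableAt_fst.fderiv_prodMk hw, fderiv_fst]
  rfl

theorem fderiv_apply_graph_of_comp_eq_snd
    (hinv : (fun q => u (q.1, w q)) =ᶠ[𝓝 p] Prod.snd)
    (hu : DifferentiableAt 𝕜 u (p.1, w p)) (hw : DifferentiableAt 𝕜 w p) (a : E × G) :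
    fderiv 𝕜 u (p.1, w p) (a.1, fderiv 𝕜 w p a) = a.2 := by
  have hchain := fderiv_comp p hu ((differentiableAt_fst (p := p)).prodMk hw)
  rw [Function.comp_def, hinv.fderiv_eq, fderiv_snd] at hchain
  rw [← fderiv_graph_apply hw, ← ContinuousLinearMap.comp_apply, ← hchain]
  rfl

theorem fderiv_fderiv_apply_graph_of_comp_eq_snd
    (hinv : (fun q => u (q.1, w q)) =ᶠ[𝓝 p] Prod.snd)
    (hu : ContDiffAt 𝕜 2 u (p.1, w p)) (hw : ContDiffAt 𝕜 2 w p) (a b : E × G) :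
    fderiv 𝕜 (fderiv 𝕜 u) (p.1, w p) (a.1, fderiv 𝕜 w p a) (b.1, fderiv 𝕜 w p b) +
      fderiv 𝕜 u (p.1, w p) (0, fderiv 𝕜 (fderiv 𝕜 w) p a b) = 0 := by
  have hchain := fderiv_fderiv_comp_apply (f := fun q => (q.1, w q)) hu
    (contDiffAt_fst.prodMk hw) a b
  rw [fderiv_fderiv_prodMk_apply contDiffAt_fst hw, Function.comp_def, hinv.fderiv.fderiv_eq,
    fderiv_graph_apply (hw.differentiableAt two_ne_zero),
    fderiv_graph_apply (hw.differentiableAt two_ne_zero)] at hchain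
  have hfst : fderiv 𝕜 (Prod.fst : E × G → E) = fun _ => fst 𝕜 E G := funext fun _ => fderiv_fst
  have hsnd : fderiv 𝕜 (Prod.snd : E × G → G) = fun _ => snd 𝕜 E G := funext fun _ => fderiv_snd
  simpa [hfst, hsnd] using hchain.symm

end RightInverseAlongGraph

end SecondOrderCalculus

theorem initial_velocity_second_derivative_general
    {n : ℕ} (V : Set (EuclideanSpace ℝ (Fin n))) (hV : IsOpen V)
    (x : EuclideanSpace ℝ (Fin n)) (hx : x ∈ V)
    (Γ : EuclideanSpace ℝ (Fin n) →
      EuclideanSpace ℝ (Fin n) →L[ℝ] EuclideanSpace ℝ (Fin n) →L[ℝ] EuclideanSpace ℝ (Fin n))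
    (u1 wmap : EuclideanSpace ℝ (Fin n) → EuclideanSpace ℝ (Fin n) → EuclideanSpace ℝ (Fin n))
    (W : Set (EuclideanSpace ℝ (Fin n) × EuclideanSpace ℝ (Fin n))) (hW : IsOpen W)
    (hmem : ∀ y ∈ V, ∀ z ∈ V, (y, wmap y z) ∈ W)
    (hu1smooth : ContDiffOn ℝ (⊤ : ℕ∞)
      (fun q : EuclideanSpace ℝ (Fin n) × EuclideanSpace ℝ (Fin n) => u1 q.1 q.2) W)
    (hu1der : ∀ y ∈ V, ∀ ξ η : EuclideanSpace ℝ (Fin n),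
      fderiv ℝ (fun q : EuclideanSpace ℝ (Fin n) × EuclideanSpace ℝ (Fin n) =>
        u1 q.1 q.2) (y, 0) (ξ, η) = ξ + η)
    (hu1der2 : ∀ y ∈ V, ∀ ξ₁ η₁ ξ₂ η₂ : EuclideanSpace ℝ (Fin n),
      fderiv ℝ (fun q : EuclideanSpace ℝ (Fin n) × EuclideanSpace ℝ (Fin n) =>
          fderiv ℝ (fun q' : EuclideanSpace ℝ (Fin n) × EuclideanSpace ℝ (Fin n) =>
            u1 q'.1 q'.2) q) (y, 0) (ξ₁, η₁) (ξ₂, η₂)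
        = -((1 / 2 : ℝ) • (Γ y η₁ η₂ + Γ y η₂ η₁)))
    (hwsmooth : ContDiffOn ℝ (⊤ : ℕ∞)
      (fun q : EuclideanSpace ℝ (Fin n) × EuclideanSpace ℝ (Fin n) => wmap q.1 q.2) (V ×ˢ V))
    (hinv : ∀ y ∈ V, ∀ z ∈ V, u1 y (wmap y z) = z)
    (hdiag : ∀ y ∈ V, wmap y y = 0) :
    ∀ ξ₁ η₁ ξ₂ η₂ : EuclideanSpace ℝ (Fin n),
      fderiv ℝ (fun q : EuclideanSpace ℝ (Fin n) × EuclideanSpace ℝ (Fin n) =>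
          fderiv ℝ (fun q' : EuclideanSpace ℝ (Fin n) × EuclideanSpace ℝ (Fin n) =>
            wmap q'.1 q'.2) q) (x, x) (ξ₁, η₁) (ξ₂, η₂)
        = (1 / 2 : ℝ) • (Γ x (η₁ - ξ₁) (η₂ - ξ₂) + Γ x (η₂ - ξ₂) (η₁ - ξ₁)) := by
  intro ξ₁ η₁ ξ₂ η₂
  set u := fun q : EuclideanSpace ℝ (Fin n) × EuclideanSpace ℝ (Fin n) => u1 q.1 q.2
  set w := fun q : EuclideanSpace ℝ (Fin n) × EuclideanSpace ℝ (Fin n) => wmap q.1 q.2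
  have hVV : V ×ˢ V ∈ 𝓝 (x, x) := (hV.prod hV).mem_nhds ⟨hx, hx⟩
  have hcomp : (fun q => u (q.1, w q)) =ᶠ[𝓝 (x, x)] Prod.snd :=
    eventually_of_mem hVV fun q hq => hinv q.1 hq.1 q.2 hq.2
  have htop : (2 : WithTop ℕ∞) ≤ ((⊤ : ℕ∞) : WithTop ℕ∞) :=
    WithTop.coe_le_coe.mpr le_top
  have hw : ContDiffAt ℝ 2 w (x, x) := (hwsmooth.contDiffAt hVV).of_le htop
  have hu : ContDiffAt ℝ 2 u (x, w (x, x)) :=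
    (hu1smooth.contDiffAt (hW.mem_nhds (hmem x hx x hx))).of_le htop
  have hwx : w (x, x) = 0 := hdiag x hx
  have hDw : ∀ ξ η, fderiv ℝ w (x, x) (ξ, η) = η - ξ := fun ξ η => by
    have h := fderiv_apply_graph_of_comp_eq_snd hcomp (hu.differentiableAt two_ne_zero)
      (hw.differentiableAt two_ne_zero) (ξ, η)
    rw [hwx, hu1der x hx] at h
    exact eq_sub_of_add_eq' h
  have h := fderiv_fderiv_apply_graph_of_comp_eq_snd hcomp hu hw (ξ₁, η₁) (ξ₂, η₂)
  rw [hwx, hDw, hDw, hu1der2 x hx, hu1der x hx, zero_add] at h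
  exact (neg_add_eq_zero.mp h).symm

/-- With `wmap(x,y)` the initial-velocity map of the inverse of the geodesic
endpoint map `G(x,w) = (x, u1(x,w))` for a smooth Christoffel symbol `Γ`, the second derivative
at a diagonal point satisfies
`wmap''(x,x)·((ξ₁,η₁),(ξ₂,η₂)) = (1/2)(Γ(x)(η₁−ξ₁,η₂−ξ₂) + Γ(x)(η₂−ξ₂,η₁−ξ₁))`,
given the first and second derivatives of `u1` at `(y,0)`:
`u1'(y,0)·(ξ,η) = ξ + η` and `u1''(y,0)·((ξ₁,η₁),(ξ₂,η₂)) = −(1/2)(Γ(y)(η₁,η₂)+Γ(y)(η₂,η₁))`. -/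
theorem initial_velocity_second_derivative
    {n : ℕ} (V : Set (EuclideanSpace ℝ (Fin n))) (hV : IsOpen V)
    (x : EuclideanSpace ℝ (Fin n)) (hx : x ∈ V)
    (Γ : EuclideanSpace ℝ (Fin n) →
      EuclideanSpace ℝ (Fin n) →L[ℝ] EuclideanSpace ℝ (Fin n) →L[ℝ] EuclideanSpace ℝ (Fin n))
    (u1 wmap : EuclideanSpace ℝ (Fin n) → EuclideanSpace ℝ (Fin n) → EuclideanSpace ℝ (Fin n))
    (W : Set (EuclideanSpace ℝ (Fin n) × EuclideanSpace ℝ (Fin n))) (hW : IsOpen W)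
    (hmem : ∀ y ∈ V, ∀ z ∈ V, (y, wmap y z) ∈ W)
    (hu1smooth : ContDiffOn ℝ (⊤ : ℕ∞)
      (fun q : EuclideanSpace ℝ (Fin n) × EuclideanSpace ℝ (Fin n) => u1 q.1 q.2) W)
    (hval : ∀ y ∈ V, u1 y 0 = y)
    (hu1der : ∀ y ∈ V, ∀ ξ η : EuclideanSpace ℝ (Fin n),
      fderiv ℝ (fun q : EuclideanSpace ℝ (Fin n) × EuclideanSpace ℝ (Fin n) =>
        u1 q.1 q.2) (y, 0) (ξ, η) = ξ + η)
    (hu1der2 : ∀ y ∈ V, ∀ ξ₁ η₁ ξ₂ η₂ : EuclideanSpace ℝ (Fin n),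
      fderiv ℝ (fun q : EuclideanSpace ℝ (Fin n) × EuclideanSpace ℝ (Fin n) =>
          fderiv ℝ (fun q' : EuclideanSpace ℝ (Fin n) × EuclideanSpace ℝ (Fin n) =>
            u1 q'.1 q'.2) q) (y, 0) (ξ₁, η₁) (ξ₂, η₂)
        = -((1 / 2 : ℝ) • (Γ y η₁ η₂ + Γ y η₂ η₁)))
    (hwsmooth : ContDiffOn ℝ (⊤ : ℕ∞)
      (fun q : EuclideanSpace ℝ (Fin n) × EuclideanSpace ℝ (Fin n) => wmap q.1 q.2) (V ×ˢ V))
    (hinv : ∀ y ∈ V, ∀ z ∈ V, u1 y (wmap y z) = z)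
    (hdiag : ∀ y ∈ V, wmap y y = 0) :
    ∀ ξ₁ η₁ ξ₂ η₂ : EuclideanSpace ℝ (Fin n),
      fderiv ℝ (fun q : EuclideanSpace ℝ (Fin n) × EuclideanSpace ℝ (Fin n) =>
          fderiv ℝ (fun q' : EuclideanSpace ℝ (Fin n) × EuclideanSpace ℝ (Fin n) =>
            wmap q'.1 q'.2) q) (x, x) (ξ₁, η₁) (ξ₂, η₂)
        = (1 / 2 : ℝ) • (Γ x (η₁ - ξ₁) (η₂ - ξ₂) + Γ x (η₂ - ξ₂) (η₁ - ξ₁)) :=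
  initial_velocity_second_derivative_general V hV x hx Γ u1 wmap W hW hmem hu1smooth hu1der hu1der2
    hwsmooth hinv hdiag
end

section
/- With a(x,y) the parallel transport operator along geodesics as above, the second derivative at the diagonal satisfies: 2·a''(x,x)((ξ₁,η₁),(ξ₂,η₂))·ζ = −(Γ'(x)·(η₁+ξ₁))(η₂−ξ₂, ζ) − (Γ'(x)·(η₂+ξ₂))(η₁−ξ₁, ζ) + Γ(x)(η₁−ξ₁, Γ(x)(η₂−ξ₂, ζ)) + Γ(x)(η₂−ξ₂, Γ(x)(η₁−ξ₁, ζ)). -/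
/-!
Differentiate the transport equation `ρ̇ = -Γ(σ)(σ̇, ρ)` twice in the endpoints `q = (x, y)`;
time and space derivatives commute because everything is smooth. On the diagonal `σ̇ = 0`, so in
the second `q`-derivative of `Γ(σ)(σ̇, ρ)` only the terms in which `σ̇` is differentiated survive,
and these are known: `∂σ̇ = η - ξ` and `∂²σ̇ = (1 - 2t)/2 · (…)` come from the given derivatives
of `σ`, and `∂ρ = -t Γ(x)(η - ξ, ζ)` from the same argument one order lower. The time derivative
of `∂²ρ(t)` is therefore affine in `t`; integrating over `[0, 1]` gives the formula, and the
`∂²σ` term drops out because `∫₀¹ (1 - 2t) dt = 0`.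
-/

open Set Filter Topology ContinuousLinearMap Function

section PartialDerivatives

variable {F G : Type*} [NormedAddCommGroup F] [NormedSpace ℝ F]
  [NormedAddCommGroup G] [NormedSpace ℝ G] {f : ℝ → F → G} {t : ℝ} {q : F}

theorem hasDerivAt_prodMk_const (t : ℝ) (q : F) :
    HasDerivAt (fun τ : ℝ => (τ, q)) ((1 : ℝ), (0 : F)) t :=
  (hasDerivAt_id t).prodMk (hasDerivAt_const t q)

theorem fderiv_eq_fderiv_uncurry_comp_inr (hf : DifferentiableAt ℝ (uncurry f) (t, q)) :
    fderiv ℝ (f t) q = (fderiv ℝ (uncurry f) (t, q)).comp (inr ℝ ℝ F) :=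
  (hf.hasFDerivAt.comp q (hasFDerivAt_prodMk_right t q)).fderiv

theorem hasDerivAt_of_differentiableAt_uncurry (hf : DifferentiableAt ℝ (uncurry f) (t, q)) :
    HasDerivAt (fun τ => f τ q) (fderiv ℝ (uncurry f) (t, q) (1, 0)) t :=
  HasFDerivAt.comp_hasDerivAt (l := uncurry f) t hf.hasFDerivAt (hasDerivAt_prodMk_const t q)

variable {U : Set F} {n : WithTop ℕ∞}

theorem ContDiffOn.contDiffAt_uncurry (hU : IsOpen U)
    (hf : ContDiffOn ℝ n (uncurry f) (univ ×ˢ U)) (hq : q ∈ U) :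
    ContDiffAt ℝ n (uncurry f) (t, q) :=
  hf.contDiffAt ((isOpen_univ.prod hU).mem_nhds ⟨trivial, hq⟩)

theorem hasDerivAt_deriv_of_contDiffOn_uncurry (hU : IsOpen U)
    (hf : ContDiffOn ℝ 1 (uncurry f) (univ ×ˢ U)) (t : ℝ) (hq : q ∈ U) :
    HasDerivAt (fun τ => f τ q) (deriv (fun τ => f τ q) t) t :=
  (hasDerivAt_of_differentiableAt_uncurry
    ((hf.contDiffAt_uncurry hU hq).differentiableAt one_ne_zero)).differentiableAt.hasDerivAt

theorem hasDerivAt_fderiv_of_contDiffOn_uncurry (hU : IsOpen U)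
    (hf : ContDiffOn ℝ 2 (uncurry f) (univ ×ˢ U)) {A : F → G}
    (hA : ∀ q ∈ U, HasDerivAt (fun τ => f τ q) (A q) t) (hq : q ∈ U) :
    HasDerivAt (fun τ => fderiv ℝ (f τ) q) (fderiv ℝ A q) t := by
  have hφ (τ : ℝ) {q' : F} (hq' : q' ∈ U) : ContDiffAt ℝ 2 (uncurry f) (τ, q') :=
    hf.contDiffAt_uncurry hU hq'
  have hφ'' :
      HasFDerivAt (fderiv ℝ (uncurry f)) (fderiv ℝ (fderiv ℝ (uncurry f)) (t, q)) (t, q) :=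
    (((hφ t hq).fderiv_right (m := 1) le_rfl).differentiableAt one_ne_zero).hasFDerivAt
  have hA_eq : A =ᶠ[𝓝 q] fun q' => fderiv ℝ (uncurry f) (t, q') (1, 0) :=
    eventually_of_mem (hU.mem_nhds hq) fun q' hq' =>
      (hA q' hq').unique (hasDerivAt_of_differentiableAt_uncurry
        ((hφ t hq').differentiableAt two_ne_zero))
  have hA' : HasFDerivAt A
      (((fderiv ℝ (fderiv ℝ (uncurry f)) (t, q)).comp (inr ℝ ℝ F)).flip (1, 0)) q := by
    have := (hφ''.comp q (hasFDerivAt_prodMk_right t q)).clm_apply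
      (hasFDerivAt_const ((1 : ℝ), (0 : F)) q)
    rw [comp_zero, zero_add] at this
    exact this.congr_of_eventuallyEq hA_eq
  have hcurve : HasDerivAt (fun τ => (fderiv ℝ (uncurry f) (τ, q)).comp (inr ℝ ℝ F))
      ((fderiv ℝ (fderiv ℝ (uncurry f)) (t, q) (1, 0)).comp (inr ℝ ℝ F)) t := by
    have h1 : HasDerivAt (fun τ => fderiv ℝ (uncurry f) (τ, q))
        (fderiv ℝ (fderiv ℝ (uncurry f)) (t, q) (1, 0)) t :=
      hφ''.comp_hasDerivAt t (hasDerivAt_prodMk_const t q)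
    simpa using h1.clm_comp (hasDerivAt_const t (inr ℝ ℝ F))
  have hsymm := (hφ t hq).isSymmSndFDerivAt (by simp)
  rw [hA'.fderiv]
  convert hcurve using 1
  · exact funext fun τ =>
      fderiv_eq_fderiv_uncurry_comp_inr ((hφ τ hq).differentiableAt two_ne_zero)
  · ext v
    exact hsymm _ _

theorem ContDiffOn.of_uncurry (hf : ContDiffOn ℝ n (uncurry f) (univ ×ˢ U)) (t : ℝ) :
    ContDiffOn ℝ n (f t) U :=
  hf.comp (contDiff_const.prodMk contDiff_id).contDiffOn fun _ hq => ⟨trivial, hq⟩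

theorem ContDiffOn.fderiv_of_uncurry (hU : IsOpen U)
    (hf : ContDiffOn ℝ (n + 1) (uncurry f) (univ ×ˢ U)) :
    ContDiffOn ℝ n (uncurry fun τ => fderiv ℝ (f τ)) (univ ×ˢ U) := by
  have h := ((compL ℝ F (ℝ × F) G).flip (inr ℝ ℝ F)).contDiff.comp_contDiffOn
    (hf.fderiv_of_isOpen (isOpen_univ.prod hU) le_rfl)
  refine h.congr fun p hp => ?_
  exact fderiv_eq_fderiv_uncurry_comp_inr
    ((hf.contDiffAt_uncurry hU hp.2).differentiableAt (by simp))

theorem ContDiffOn.deriv_of_uncurry (hU : IsOpen U)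
    (hf : ContDiffOn ℝ (n + 1) (uncurry f) (univ ×ˢ U)) (t : ℝ) :
    ContDiffOn ℝ n (fun q => deriv (fun τ => f τ q) t) U := by
  have h : ContDiffOn ℝ n (fun q => fderiv ℝ (uncurry f) (t, q) (1, 0)) U :=
    ContDiffOn.of_uncurry (f := fun τ q => fderiv ℝ (uncurry f) (τ, q) (1, 0))
      ((apply ℝ G ((1 : ℝ), (0 : F))).contDiff.comp_contDiffOn
        (hf.fderiv_of_isOpen (isOpen_univ.prod hU) le_rfl)) t
  refine h.congr fun q hq => ?_
  exact (hasDerivAt_of_differentiableAt_uncurry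
    ((hf.contDiffAt_uncurry hU hq).differentiableAt (by simp))).deriv

theorem hasDerivAt_fderiv_fderiv_of_contDiffOn_uncurry (hU : IsOpen U)
    (hf : ContDiffOn ℝ 3 (uncurry f) (univ ×ˢ U)) {A : F → G}
    (hA : ∀ q ∈ U, HasDerivAt (fun τ => f τ q) (A q) t) (hq : q ∈ U) :
    HasDerivAt (fun τ => fderiv ℝ (fderiv ℝ (f τ)) q) (fderiv ℝ (fderiv ℝ A) q) t :=
  hasDerivAt_fderiv_of_contDiffOn_uncurry hU (hf.fderiv_of_uncurry (n := 2) hU)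
    (fun _ hq' => hasDerivAt_fderiv_of_contDiffOn_uncurry hU (hf.of_le (by norm_num)) hA hq') hq

end PartialDerivatives

section BilinearApplication

variable {𝕜 F G H K : Type*} [NontriviallyNormedField 𝕜]
  [NormedAddCommGroup F] [NormedSpace 𝕜 F] [NormedAddCommGroup G] [NormedSpace 𝕜 G]
  [NormedAddCommGroup H] [NormedSpace 𝕜 H] [NormedAddCommGroup K] [NormedSpace 𝕜 K]

theorem fderiv_fderiv_apply {f : F → G} {p : F} (hf : DifferentiableAt 𝕜 (fderiv 𝕜 f) p)
    (v w : F) : fderiv 𝕜 (fun q => fderiv 𝕜 f q v) p w = fderiv 𝕜 (fderiv 𝕜 f) p w v := by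
  simp [fderiv_clm_apply hf (differentiableAt_const v)]

theorem ContDiffAt.differentiableAt_fderiv {f : F → G} {p : F} (hf : ContDiffAt 𝕜 2 f p) :
    DifferentiableAt 𝕜 (fderiv 𝕜 f) p :=
  (hf.fderiv_right (m := 1) le_rfl).differentiableAt one_ne_zero

variable {B : F → G →L[𝕜] H →L[𝕜] K} {u : F → G} {w : F → H} {p : F}

theorem fderiv_clm_apply_apply (hB : DifferentiableAt 𝕜 B p) (hu : DifferentiableAt 𝕜 u p)
    (hw : DifferentiableAt 𝕜 w p) (v : F) :
    fderiv 𝕜 (fun q => B q (u q) (w q)) p v =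
      fderiv 𝕜 B p v (u p) (w p) + B p (fderiv 𝕜 u p v) (w p) + B p (u p) (fderiv 𝕜 w p v) := by
  rw [fderiv_clm_apply (hB.clm_apply hu) hw, fderiv_clm_apply hB hu]
  simp only [add_apply, coe_comp, comp_apply, flip_apply]
  abel

theorem fderiv_fderiv_clm_apply_apply_of_eq_zero (hB : ContDiffAt 𝕜 2 B p)
    (hu : ContDiffAt 𝕜 2 u p) (hw : ContDiffAt 𝕜 2 w p) (hup : u p = 0) (v₁ v₂ : F) :
    fderiv 𝕜 (fderiv 𝕜 fun q => B q (u q) (w q)) p v₁ v₂ =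
      fderiv 𝕜 B p v₁ (fderiv 𝕜 u p v₂) (w p) + fderiv 𝕜 B p v₂ (fderiv 𝕜 u p v₁) (w p)
        + B p (fderiv 𝕜 (fderiv 𝕜 u) p v₁ v₂) (w p)
        + B p (fderiv 𝕜 u p v₂) (fderiv 𝕜 w p v₁) + B p (fderiv 𝕜 u p v₁) (fderiv 𝕜 w p v₂) := by
  have hfirst : (fun q => fderiv 𝕜 (fun q => B q (u q) (w q)) q v₂) =ᶠ[𝓝 p]
      fun q => fderiv 𝕜 B q v₂ (u q) (w q) + B q (fderiv 𝕜 u q v₂) (w q)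
        + B q (u q) (fderiv 𝕜 w q v₂) := by
    filter_upwards [hB.eventually (by simp), hu.eventually (by simp), hw.eventually (by simp)]
      with q hBq huq hwq
    exact fderiv_clm_apply_apply (hBq.differentiableAt two_ne_zero)
      (huq.differentiableAt two_ne_zero) (hwq.differentiableAt two_ne_zero) v₂
  have hB₁ := hB.differentiableAt_fderiv.clm_apply (differentiableAt_const v₂)
  have hu₁ := hu.differentiableAt_fderiv.clm_apply (differentiableAt_const v₂)
  have hw₁ := hw.differentiableAt_fderiv.clm_apply (differentiableAt_const v₂)
  have hB₀ := hB.differentiableAt two_ne_zero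
  have hu₀ := hu.differentiableAt two_ne_zero
  have hw₀ := hw.differentiableAt two_ne_zero
  rw [← fderiv_fderiv_apply ((hB.clm_apply hu).clm_apply hw).differentiableAt_fderiv,
    hfirst.fderiv_eq, fderiv_fun_add (((hB₁.clm_apply hu₀).clm_apply hw₀).fun_add
      ((hB₀.clm_apply hu₁).clm_apply hw₀)) ((hB₀.clm_apply hu₀).clm_apply hw₁),
    fderiv_fun_add ((hB₁.clm_apply hu₀).clm_apply hw₀) ((hB₀.clm_apply hu₁).clm_apply hw₀)]
  simp only [add_apply, fderiv_clm_apply_apply hB₁ hu₀ hw₀, fderiv_clm_apply_apply hB₀ hu₁ hw₀,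
    fderiv_clm_apply_apply hB₀ hu₀ hw₁, fderiv_fderiv_apply hB.differentiableAt_fderiv,
    fderiv_fderiv_apply hu.differentiableAt_fderiv, fderiv_fderiv_apply hw.differentiableAt_fderiv,
    hup, map_zero, zero_apply]
  abel

end BilinearApplication

theorem eq_add_smul_add_sq_smul_of_hasDerivAt {G : Type*} [NormedAddCommGroup G]
    [NormedSpace ℝ G] {f : ℝ → G} {a b : G} (hf : ∀ t, HasDerivAt f (a + t • b) t) (t : ℝ) :
    f t = f 0 + t • a + (t ^ 2 / 2) • b := by
  have hg (τ : ℝ) : HasDerivAt (fun τ => f τ - τ • a - (τ ^ 2 / 2) • b) 0 τ := by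
    convert ((hf τ).fun_sub ((hasDerivAt_id τ).smul_const a)).fun_sub
      (((hasDerivAt_pow 2 τ).div_const 2).smul_const b) using 1
    norm_num
    module
  have := is_const_of_deriv_eq_zero (fun τ => (hg τ).differentiableAt) (fun τ => (hg τ).deriv) t 0
  simp only [zero_smul, sub_zero, ne_eq, OfNat.ofNat_ne_zero, not_false_eq_true, zero_pow,
    zero_div] at this
  rw [← this]
  abel

section ParallelTransport

variable {E : Type*} [NormedAddCommGroup E] [NormedSpace ℝ E]
  {Γ : E → E →L[ℝ] E →L[ℝ] E} {U : Set (E × E)} {x : E} {s r : ℝ → E × E → E}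

theorem parallelTransport_diag (hsx : ∀ t, s t (x, x) = x) {ζ : E} (hr₀ : r 0 (x, x) = ζ)
    (hrODE : ∀ t, HasDerivAt (fun τ => r τ (x, x))
      (-(Γ (s t (x, x)) (deriv (fun τ => s τ (x, x)) t) (r t (x, x)))) t) (t : ℝ) :
    r t (x, x) = ζ := by
  have hr' (τ : ℝ) : HasDerivAt (fun τ => r τ (x, x)) 0 τ := by
    simpa [hsx] using hrODE τ
  rw [← hr₀]
  exact is_const_of_deriv_eq_zero (fun τ => (hr' τ).differentiableAt) (fun τ => (hr' τ).deriv) t 0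

theorem hasFDerivAt_velocity_diag (hU : IsOpen U) (hx : (x, x) ∈ U)
    (hs : ContDiffOn ℝ 2 (uncurry s) (univ ×ˢ U))
    (hs₁ : ∀ t v, fderiv ℝ (s t) (x, x) v = v.1 + t • (v.2 - v.1)) (t : ℝ) :
    HasFDerivAt (fun q => deriv (fun τ => s τ q) t) (snd ℝ E E - fst ℝ E E) (x, x) := by
  have hswap := hasDerivAt_fderiv_of_contDiffOn_uncurry hU hs
    (fun q hq => hasDerivAt_deriv_of_contDiffOn_uncurry hU (hs.of_le one_le_two) t hq) hx
  have hlin : HasDerivAt (fun τ => fderiv ℝ (s τ) (x, x)) (snd ℝ E E - fst ℝ E E) t := by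
    have hs₁' : (fun τ => fderiv ℝ (s τ) (x, x)) =
        fun τ : ℝ => fst ℝ E E + τ • (snd ℝ E E - fst ℝ E E) := by
      ext1 τ; exact ContinuousLinearMap.ext fun v => by simp [hs₁]
    rw [hs₁']
    simpa using ((hasDerivAt_id t).smul_const (snd ℝ E E - fst ℝ E E)).const_add (fst ℝ E E)
  have hdiff := ((hs.deriv_of_uncurry (n := 1) hU t).contDiffAt (hU.mem_nhds hx)).differentiableAt
    one_ne_zero
  exact hswap.unique hlin ▸ hdiff.hasFDerivAt

theorem fderiv_fderiv_velocity_diag (hU : IsOpen U) (hx : (x, x) ∈ U)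
    (hs : ContDiffOn ℝ 3 (uncurry s) (univ ×ˢ U)) {c : E × E → E × E → E}
    (hs₂ : ∀ t v₁ v₂, fderiv ℝ (fderiv ℝ (s t)) (x, x) v₁ v₂ = ((t - t ^ 2) / 2) • c v₁ v₂)
    (t : ℝ) (v₁ v₂ : E × E) :
    fderiv ℝ (fderiv ℝ fun q => deriv (fun τ => s τ q) t) (x, x) v₁ v₂
      = ((1 - 2 * t) / 2) • c v₁ v₂ := by
  have hswap := ((hasDerivAt_fderiv_fderiv_of_contDiffOn_uncurry hU hs
    (fun q hq => hasDerivAt_deriv_of_contDiffOn_uncurry hU (hs.of_le (by norm_num)) t hq)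
    hx).clm_apply (hasDerivAt_const t v₁)).clm_apply (hasDerivAt_const t v₂)
  simp only [map_zero, add_zero] at hswap
  rw [funext fun τ => hs₂ τ v₁ v₂] at hswap
  refine hswap.unique ?_
  convert (((hasDerivAt_id t).sub (hasDerivAt_pow 2 t)).div_const 2).smul_const (c v₁ v₂)
    using 2 <;> norm_num

theorem fderiv_parallelTransport_diag (hU : IsOpen U) (hx : (x, x) ∈ U)
    (hs : ContDiffOn ℝ 2 (uncurry s) (univ ×ˢ U)) (hr : ContDiffOn ℝ 2 (uncurry r) (univ ×ˢ U))
    (hΓ : DifferentiableAt ℝ Γ x) (hsx : ∀ t, s t (x, x) = x)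
    (hs₁ : ∀ t v, fderiv ℝ (s t) (x, x) v = v.1 + t • (v.2 - v.1))
    {ζ : E} (hr₀ : ∀ q ∈ U, r 0 q = ζ)
    (hrODE : ∀ t, ∀ q ∈ U,
      HasDerivAt (fun τ => r τ q) (-(Γ (s t q) (deriv (fun τ => s τ q) t) (r t q))) t)
    (t : ℝ) (v : E × E) :
    fderiv ℝ (r t) (x, x) v = -(t • Γ x (v.2 - v.1) ζ) := by
  have hrx (τ : ℝ) : r τ (x, x) = ζ :=
    parallelTransport_diag hsx (hr₀ _ hx) (fun τ => hrODE τ _ hx) τ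
  have hrhs (τ : ℝ) : fderiv ℝ (fun q => -(Γ (s τ q) (deriv (fun τ' => s τ' q) τ) (r τ q)))
      (x, x) v = -(Γ x (v.2 - v.1) ζ) := by
    have hΓτ : DifferentiableAt ℝ Γ (s τ (x, x)) := by rw [hsx]; exact hΓ
    have hB : DifferentiableAt ℝ (fun q => Γ (s τ q)) (x, x) :=
      DifferentiableAt.comp (g := Γ) (x, x) hΓτ
        (((hs.of_uncurry τ).contDiffAt (hU.mem_nhds hx)).differentiableAt two_ne_zero)
    have hu := hasFDerivAt_velocity_diag hU hx hs hs₁ τ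
    have hw := ((hr.of_uncurry τ).contDiffAt (hU.mem_nhds hx)).differentiableAt two_ne_zero
    rw [fderiv_fun_neg, neg_apply, fderiv_clm_apply_apply hB hu.differentiableAt hw]
    simp [hsx, hrx, hu.fderiv]
  have hcurve (τ : ℝ) : HasDerivAt (fun τ => fderiv ℝ (r τ) (x, x) v)
      (-(Γ x (v.2 - v.1) ζ) + τ • 0) τ := by
    simpa only [map_zero, add_zero, smul_zero, hrhs] using
      (hasDerivAt_fderiv_of_contDiffOn_uncurry hU hr (hrODE τ) hx).clm_apply
        (hasDerivAt_const τ v)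
  have hr₀' : fderiv ℝ (r 0) (x, x) = 0 := by
    have hev : r 0 =ᶠ[𝓝 (x, x)] fun _ => ζ := eventually_of_mem (hU.mem_nhds hx) hr₀
    rw [hev.fderiv_eq, fderiv_const_apply]
  rw [eq_add_smul_add_sq_smul_of_hasDerivAt hcurve t, hr₀']
  simp only [zero_apply, zero_add, smul_zero, add_zero, smul_neg]

theorem fderiv_fderiv_transportRHS_diag (hU : IsOpen U) (hx : (x, x) ∈ U)
    (hs : ContDiffOn ℝ 3 (uncurry s) (univ ×ˢ U)) (hr : ContDiffOn ℝ 2 (uncurry r) (univ ×ˢ U))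
    (hΓ : ContDiffAt ℝ 2 Γ x) (hsx : ∀ t, s t (x, x) = x)
    (hs₁ : ∀ t v, fderiv ℝ (s t) (x, x) v = v.1 + t • (v.2 - v.1)) {c : E × E → E × E → E}
    (hs₂ : ∀ t v₁ v₂, fderiv ℝ (fderiv ℝ (s t)) (x, x) v₁ v₂ = ((t - t ^ 2) / 2) • c v₁ v₂)
    {ζ : E} (hr₀ : ∀ q ∈ U, r 0 q = ζ)
    (hrODE : ∀ t, ∀ q ∈ U,
      HasDerivAt (fun τ => r τ q) (-(Γ (s t q) (deriv (fun τ => s τ q) t) (r t q))) t)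
    (t : ℝ) (v₁ v₂ : E × E) :
    fderiv ℝ (fderiv ℝ fun q => -(Γ (s t q) (deriv (fun τ => s τ q) t) (r t q))) (x, x) v₁ v₂ =
      -(fderiv ℝ Γ x (v₁.1 + t • (v₁.2 - v₁.1)) (v₂.2 - v₂.1) ζ
        + fderiv ℝ Γ x (v₂.1 + t • (v₂.2 - v₂.1)) (v₁.2 - v₁.1) ζ
        + ((1 - 2 * t) / 2) • Γ x (c v₁ v₂) ζ
        - t • Γ x (v₂.2 - v₂.1) (Γ x (v₁.2 - v₁.1) ζ)
        - t • Γ x (v₁.2 - v₁.1) (Γ x (v₂.2 - v₂.1) ζ)) := by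
  have hs_t : ContDiffAt ℝ 2 (s t) (x, x) :=
    ((hs.of_uncurry t).contDiffAt (hU.mem_nhds hx)).of_le (by norm_num)
  have hΓ_t : ContDiffAt ℝ 2 Γ (s t (x, x)) := by rw [hsx]; exact hΓ
  have hB : ContDiffAt ℝ 2 (fun q => Γ (s t q)) (x, x) := hΓ_t.comp (x, x) hs_t
  have hu : ContDiffAt ℝ 2 (fun q => deriv (fun τ => s τ q) t) (x, x) :=
    (hs.deriv_of_uncurry (n := 2) hU t).contDiffAt (hU.mem_nhds hx)
  have hw : ContDiffAt ℝ 2 (r t) (x, x) := (hr.of_uncurry t).contDiffAt (hU.mem_nhds hx)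
  have hup : deriv (fun τ => s τ (x, x)) t = 0 := by simp [hsx]
  have hneg : (fderiv ℝ fun q => -(Γ (s t q) (deriv (fun τ => s τ q) t) (r t q))) =
      -fderiv ℝ fun q => Γ (s t q) (deriv (fun τ => s τ q) t) (r t q) :=
    funext fun _ => fderiv_fun_neg
  have hB' (v : E × E) :
      fderiv ℝ (fun q => Γ (s t q)) (x, x) v = fderiv ℝ Γ x (v.1 + t • (v.2 - v.1)) := by
    rw [fderiv_fun_comp (x, x) (hΓ_t.differentiableAt two_ne_zero)
      (hs_t.differentiableAt two_ne_zero)]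
    simp [hsx, hs₁]
  rw [hneg, fderiv_neg, neg_apply, neg_apply,
    fderiv_fderiv_clm_apply_apply_of_eq_zero hB hu hw hup]
  simp only [hB', hsx, (hasFDerivAt_velocity_diag hU hx (hs.of_le (by norm_num)) hs₁ t).fderiv,
    fderiv_fderiv_velocity_diag hU hx hs hs₂,
    parallelTransport_diag hsx (hr₀ _ hx) (fun τ => hrODE τ _ hx),
    fderiv_parallelTransport_diag hU hx (hs.of_le (by norm_num)) hr
      (hΓ.differentiableAt two_ne_zero) hsx hs₁ hr₀ hrODE]
  simp only [sub_apply, coe_snd', coe_fst', map_smul, map_neg, smul_apply]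
  abel

theorem two_smul_fderiv_fderiv_parallelTransport_diag (hU : IsOpen U) (hx : (x, x) ∈ U)
    (hs : ContDiffOn ℝ 3 (uncurry s) (univ ×ˢ U)) (hr : ContDiffOn ℝ 3 (uncurry r) (univ ×ˢ U))
    (hΓ : ContDiffAt ℝ 2 Γ x) (hsx : ∀ t, s t (x, x) = x)
    (hs₁ : ∀ t v, fderiv ℝ (s t) (x, x) v = v.1 + t • (v.2 - v.1)) {c : E × E → E × E → E}
    (hs₂ : ∀ t v₁ v₂, fderiv ℝ (fderiv ℝ (s t)) (x, x) v₁ v₂ = ((t - t ^ 2) / 2) • c v₁ v₂)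
    {ζ : E} (hr₀ : ∀ q ∈ U, r 0 q = ζ)
    (hrODE : ∀ t, ∀ q ∈ U,
      HasDerivAt (fun τ => r τ q) (-(Γ (s t q) (deriv (fun τ => s τ q) t) (r t q))) t)
    (v₁ v₂ : E × E) :
    (2 : ℝ) • fderiv ℝ (fderiv ℝ (r 1)) (x, x) v₁ v₂ =
      -(fderiv ℝ Γ x (v₁.2 + v₁.1) (v₂.2 - v₂.1) ζ) - fderiv ℝ Γ x (v₂.2 + v₂.1) (v₁.2 - v₁.1) ζ
        + Γ x (v₁.2 - v₁.1) (Γ x (v₂.2 - v₂.1) ζ) + Γ x (v₂.2 - v₂.1) (Γ x (v₁.2 - v₁.1) ζ) := by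
  set d₁ := v₁.2 - v₁.1
  set d₂ := v₂.2 - v₂.1
  have hcurve (t : ℝ) : HasDerivAt (fun τ => fderiv ℝ (fderiv ℝ (r τ)) (x, x) v₁ v₂)
      (-(fderiv ℝ Γ x v₁.1 d₂ ζ + fderiv ℝ Γ x v₂.1 d₁ ζ + (1 / 2 : ℝ) • Γ x (c v₁ v₂) ζ)
        + t • -(fderiv ℝ Γ x d₁ d₂ ζ + fderiv ℝ Γ x d₂ d₁ ζ - Γ x (c v₁ v₂) ζ
          - Γ x d₂ (Γ x d₁ ζ) - Γ x d₁ (Γ x d₂ ζ))) t := by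
    have h := ((hasDerivAt_fderiv_fderiv_of_contDiffOn_uncurry hU hr (hrODE t) hx).clm_apply
      (hasDerivAt_const t v₁)).clm_apply (hasDerivAt_const t v₂)
    simp only [map_zero, add_zero] at h
    rw [fderiv_fderiv_transportRHS_diag hU hx hs (hr.of_le (by norm_num)) hΓ hsx hs₁ hs₂ hr₀
      hrODE] at h
    convert h using 1
    simp only [map_add, map_smul, add_apply, smul_apply]
    module
  have hr₀' : fderiv ℝ (fderiv ℝ (r 0)) (x, x) = 0 := by
    have hev : fderiv ℝ (r 0) =ᶠ[𝓝 (x, x)] fun _ => 0 := by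
      filter_upwards [hU.mem_nhds hx] with q hq
      have hev' : r 0 =ᶠ[𝓝 q] fun _ => ζ := eventually_of_mem (hU.mem_nhds hq) hr₀
      rw [hev'.fderiv_eq, fderiv_const_apply]
    rw [hev.fderiv_eq, fderiv_const_apply]
  rw [eq_add_smul_add_sq_smul_of_hasDerivAt hcurve 1, hr₀']
  simp only [d₁, d₂, map_add, map_sub, add_apply, sub_apply, zero_apply]
  module

end ParallelTransport

theorem parallel_transport_second_derivative_general
    {n : ℕ} (V : Set (EuclideanSpace ℝ (Fin n))) (hV : IsOpen V)
    (x : EuclideanSpace ℝ (Fin n)) (hx : x ∈ V)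
    (Γ : EuclideanSpace ℝ (Fin n) →
      EuclideanSpace ℝ (Fin n) →L[ℝ] EuclideanSpace ℝ (Fin n) →L[ℝ] EuclideanSpace ℝ (Fin n))
    (hΓ : ContDiffOn ℝ (⊤ : ℕ∞) Γ V)
    (σ : ℝ → EuclideanSpace ℝ (Fin n) → EuclideanSpace ℝ (Fin n) → EuclideanSpace ℝ (Fin n))
    (ρ : ℝ → EuclideanSpace ℝ (Fin n) → EuclideanSpace ℝ (Fin n) → EuclideanSpace ℝ (Fin n) →
      EuclideanSpace ℝ (Fin n))
    -- smoothness of the geodesic `σ` and diagonal facts: `σ(t,x,x) = x`, `σ̇(t,x,x) = 0`,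
    -- `σ'(t,x,x)·(ξ,η) = ξ + t(η−ξ)`
    (hσsmooth : ContDiffOn ℝ (⊤ : ℕ∞)
      (fun p : ℝ × EuclideanSpace ℝ (Fin n) × EuclideanSpace ℝ (Fin n) =>
        σ p.1 p.2.1 p.2.2) (Set.univ ×ˢ V ×ˢ V))
    (hσdiag : ∀ t : ℝ, ∀ y ∈ V, σ t y y = y)
    (hσder : ∀ t : ℝ, ∀ y ∈ V, ∀ ξ η : EuclideanSpace ℝ (Fin n),
      fderiv ℝ (fun q : EuclideanSpace ℝ (Fin n) × EuclideanSpace ℝ (Fin n) =>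
        σ t q.1 q.2) (y, y) (ξ, η) = ξ + t • (η - ξ))
    (hσder2 : ∀ t : ℝ, ∀ y ∈ V, ∀ ξ₁ η₁ ξ₂ η₂ : EuclideanSpace ℝ (Fin n),
      fderiv ℝ (fun q : EuclideanSpace ℝ (Fin n) × EuclideanSpace ℝ (Fin n) =>
          fderiv ℝ (fun q' : EuclideanSpace ℝ (Fin n) × EuclideanSpace ℝ (Fin n) =>
            σ t q'.1 q'.2) q) (y, y) (ξ₁, η₁) (ξ₂, η₂)
        = ((t - t ^ 2) / 2) • (Γ y (η₁ - ξ₁) (η₂ - ξ₂) + Γ y (η₂ - ξ₂) (η₁ - ξ₁)))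
    -- `ρ` is smooth and solves the parallel transport ODE along `σ`
    (hρsmooth : ContDiffOn ℝ (⊤ : ℕ∞)
      (fun p : ℝ × EuclideanSpace ℝ (Fin n) × EuclideanSpace ℝ (Fin n) ×
          EuclideanSpace ℝ (Fin n) => ρ p.1 p.2.1 p.2.2.1 p.2.2.2)
      (Set.univ ×ˢ V ×ˢ V ×ˢ Set.univ))
    (hρinit : ∀ x' ∈ V, ∀ y' ∈ V, ∀ ζ : EuclideanSpace ℝ (Fin n), ρ 0 x' y' ζ = ζ)
    (hρODE : ∀ t : ℝ, ∀ x' ∈ V, ∀ y' ∈ V, ∀ ζ : EuclideanSpace ℝ (Fin n),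
      HasDerivAt (fun τ => ρ τ x' y' ζ)
        (-(Γ (σ t x' y') (deriv (fun τ => σ τ x' y') t) (ρ t x' y' ζ))) t) :
    ∀ ξ₁ η₁ ξ₂ η₂ ζ : EuclideanSpace ℝ (Fin n),
      (2 : ℝ) • fderiv ℝ (fun q : EuclideanSpace ℝ (Fin n) × EuclideanSpace ℝ (Fin n) =>
          fderiv ℝ (fun q' : EuclideanSpace ℝ (Fin n) × EuclideanSpace ℝ (Fin n) =>
            ρ 1 q'.1 q'.2 ζ) q) (x, x) (ξ₁, η₁) (ξ₂, η₂)
        = -(fderiv ℝ Γ x (η₁ + ξ₁) (η₂ - ξ₂) ζ) - fderiv ℝ Γ x (η₂ + ξ₂) (η₁ - ξ₁) ζ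
          + Γ x (η₁ - ξ₁) (Γ x (η₂ - ξ₂) ζ) + Γ x (η₂ - ξ₂) (Γ x (η₁ - ξ₁) ζ) := by
  intro ξ₁ η₁ ξ₂ η₂ ζ
  have hρζ : ContDiffOn ℝ 3 (uncurry fun t (q : EuclideanSpace ℝ (Fin n) × _) => ρ t q.1 q.2 ζ)
      (univ ×ˢ V ×ˢ V) :=
    (hρsmooth.comp (contDiff_fst.prodMk ((contDiff_fst.comp contDiff_snd).prodMk
      ((contDiff_snd.comp contDiff_snd).prodMk contDiff_const))).contDiffOn
      fun _ hp => ⟨trivial, hp.2.1, hp.2.2, trivial⟩).of_le ENat.LEInfty.out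
  exact two_smul_fderiv_fderiv_parallelTransport_diag (hV.prod hV) ⟨hx, hx⟩
    (s := fun t q => σ t q.1 q.2) (hσsmooth.of_le ENat.LEInfty.out) hρζ
    ((hΓ.contDiffAt (hV.mem_nhds hx)).of_le ENat.LEInfty.out) (fun t => hσdiag t x hx)
    (fun t v => hσder t x hx v.1 v.2) (fun t v₁ v₂ => hσder2 t x hx v₁.1 v₁.2 v₂.1 v₂.2)
    (fun q hq => hρinit q.1 hq.1 q.2 hq.2 ζ) (fun t q hq => hρODE t q.1 hq.1 q.2 hq.2 ζ)
    (ξ₁, η₁) (ξ₂, η₂)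

/-- Let `a(x,y)·ζ := ρ(1,x,y,ζ)` be parallel transport from `x` to `y` along
the short geodesic `σ`, where `ρ` solves `ρ(0) = ζ`, `ρ̇(t) = −Γ(σ(t,x,y))(σ̇(t,x,y), ρ(t))`.
Then the second derivative at the diagonal satisfies
`2·a''(x,x)((ξ₁,η₁),(ξ₂,η₂))·ζ = −(Γ'(x)·(η₁+ξ₁))(η₂−ξ₂,ζ) − (Γ'(x)·(η₂+ξ₂))(η₁−ξ₁,ζ)
 + Γ(x)(η₁−ξ₁, Γ(x)(η₂−ξ₂,ζ)) + Γ(x)(η₂−ξ₂, Γ(x)(η₁−ξ₁,ζ))`. -/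
theorem parallel_transport_second_derivative
    {n : ℕ} (V : Set (EuclideanSpace ℝ (Fin n))) (hV : IsOpen V)
    (x : EuclideanSpace ℝ (Fin n)) (hx : x ∈ V)
    (Γ : EuclideanSpace ℝ (Fin n) →
      EuclideanSpace ℝ (Fin n) →L[ℝ] EuclideanSpace ℝ (Fin n) →L[ℝ] EuclideanSpace ℝ (Fin n))
    (hΓ : ContDiffOn ℝ (⊤ : ℕ∞) Γ V)
    (σ : ℝ → EuclideanSpace ℝ (Fin n) → EuclideanSpace ℝ (Fin n) → EuclideanSpace ℝ (Fin n))
    (ρ : ℝ → EuclideanSpace ℝ (Fin n) → EuclideanSpace ℝ (Fin n) → EuclideanSpace ℝ (Fin n) →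
      EuclideanSpace ℝ (Fin n))
    -- smoothness of the geodesic `σ` and diagonal facts: `σ(t,x,x) = x`, `σ̇(t,x,x) = 0`,
    -- `σ'(t,x,x)·(ξ,η) = ξ + t(η−ξ)`
    (hσsmooth : ContDiffOn ℝ (⊤ : ℕ∞)
      (fun p : ℝ × EuclideanSpace ℝ (Fin n) × EuclideanSpace ℝ (Fin n) =>
        σ p.1 p.2.1 p.2.2) (Set.univ ×ˢ V ×ˢ V))
    (hσdiag : ∀ t : ℝ, ∀ y ∈ V, σ t y y = y)
    (hσdot : ∀ t : ℝ, ∀ y ∈ V, HasDerivAt (fun τ => σ τ y y) 0 t)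
    (hσder : ∀ t : ℝ, ∀ y ∈ V, ∀ ξ η : EuclideanSpace ℝ (Fin n),
      fderiv ℝ (fun q : EuclideanSpace ℝ (Fin n) × EuclideanSpace ℝ (Fin n) =>
        σ t q.1 q.2) (y, y) (ξ, η) = ξ + t • (η - ξ))
    (hσder2 : ∀ t : ℝ, ∀ y ∈ V, ∀ ξ₁ η₁ ξ₂ η₂ : EuclideanSpace ℝ (Fin n),
      fderiv ℝ (fun q : EuclideanSpace ℝ (Fin n) × EuclideanSpace ℝ (Fin n) =>
          fderiv ℝ (fun q' : EuclideanSpace ℝ (Fin n) × EuclideanSpace ℝ (Fin n) =>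
            σ t q'.1 q'.2) q) (y, y) (ξ₁, η₁) (ξ₂, η₂)
        = ((t - t ^ 2) / 2) • (Γ y (η₁ - ξ₁) (η₂ - ξ₂) + Γ y (η₂ - ξ₂) (η₁ - ξ₁)))
    -- `ρ` is smooth and solves the parallel transport ODE along `σ`
    (hρsmooth : ContDiffOn ℝ (⊤ : ℕ∞)
      (fun p : ℝ × EuclideanSpace ℝ (Fin n) × EuclideanSpace ℝ (Fin n) ×
          EuclideanSpace ℝ (Fin n) => ρ p.1 p.2.1 p.2.2.1 p.2.2.2)
      (Set.univ ×ˢ V ×ˢ V ×ˢ Set.univ))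
    (hρinit : ∀ x' ∈ V, ∀ y' ∈ V, ∀ ζ : EuclideanSpace ℝ (Fin n), ρ 0 x' y' ζ = ζ)
    (hρODE : ∀ t : ℝ, ∀ x' ∈ V, ∀ y' ∈ V, ∀ ζ : EuclideanSpace ℝ (Fin n),
      HasDerivAt (fun τ => ρ τ x' y' ζ)
        (-(Γ (σ t x' y') (deriv (fun τ => σ τ x' y') t) (ρ t x' y' ζ))) t) :
    ∀ ξ₁ η₁ ξ₂ η₂ ζ : EuclideanSpace ℝ (Fin n),
      (2 : ℝ) • fderiv ℝ (fun q : EuclideanSpace ℝ (Fin n) × EuclideanSpace ℝ (Fin n) =>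
          fderiv ℝ (fun q' : EuclideanSpace ℝ (Fin n) × EuclideanSpace ℝ (Fin n) =>
            ρ 1 q'.1 q'.2 ζ) q) (x, x) (ξ₁, η₁) (ξ₂, η₂)
        = -(fderiv ℝ Γ x (η₁ + ξ₁) (η₂ - ξ₂) ζ) - fderiv ℝ Γ x (η₂ + ξ₂) (η₁ - ξ₁) ζ
          + Γ x (η₁ - ξ₁) (Γ x (η₂ - ξ₂) ζ) + Γ x (η₂ - ξ₂) (Γ x (η₁ - ξ₁) ζ) :=
  parallel_transport_second_derivative_general V hV x hx Γ hΓ σ ρ hσsmooth hσdiag hσder hσder2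
    hρsmooth hρinit hρODE
end

section
/- Suppose for every triple of smooth vector fields X, Y, Z on an open set U ⊆ ℝⁿ and every x ∈ U one has −X''(x)(Y(x),Z(x)) + X'(x)·Γ(x)(Y(x),Z(x)) − (Γ'(x)·X(x))(Y(x),Z(x)) − Γ(x)(X'(x)Y(x), Z(x)) − Γ(x)(Y(x), X'(x)Z(x)) = 0, where Γ : U → L²(ℝⁿ×ℝⁿ,ℝⁿ) is smooth. Then no such Γ exists; more precisely, the hypothesis leads to a contradiction: choosing X locally constant forces Γ' = 0, choosing X with X' = id near x forces Γ = 0, and then the remaining condition X''(x)(Y(x),Z(x)) = 0 for all X,Y,Z fails (e.g., for X a quadratic vector field). -/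
/-!
Constant fields `X, Y, Z` reduce the obstruction to `-Γ'(x)(X, Y, Z)`, so `Γ'(x) = 0`; then
`X = id` with constant `Y, Z` reduces it to `-Γ(x)(Y, Z)`, so `Γ(x) = 0`. What remains is
`-X''(x)(Y, Z)`, and the quadratic field `y ↦ L(y)² e` with `L e ≠ 0` has
`X''(x)(e, e) = 2 L(e)² e ≠ 0`.
-/

noncomputable section

variable {E : Type*} [NormedAddCommGroup E] [NormedSpace ℝ E]

def lieObstruction (Γ : E → E →L[ℝ] E →L[ℝ] E) (X Y Z : E → E) (x : E) : E :=
  -(fderiv ℝ (fun y => fderiv ℝ X y) x (Y x) (Z x))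
    + fderiv ℝ X x (Γ x (Y x) (Z x))
    - fderiv ℝ Γ x (X x) (Y x) (Z x)
    - Γ x (fderiv ℝ X x (Y x)) (Z x)
    - Γ x (Y x) (fderiv ℝ X x (Z x))

variable (Γ : E → E →L[ℝ] E →L[ℝ] E)

theorem lieObstruction_const (v a b x : E) :
    lieObstruction Γ (fun _ => v) (fun _ => a) (fun _ => b) x = -fderiv ℝ Γ x v a b := by
  simp [lieObstruction]

theorem lieObstruction_id (a b x : E) :
    lieObstruction Γ id (fun _ => a) (fun _ => b) x = -fderiv ℝ Γ x x a b - Γ x a b := by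
  simp [lieObstruction]

theorem lieObstruction_of_eq_zero_of_fderiv_eq_zero {x : E} (h₀ : Γ x = 0)
    (h₁ : fderiv ℝ Γ x = 0) (X Y Z : E → E) :
    lieObstruction Γ X Y Z x = -fderiv ℝ (fun y => fderiv ℝ X y) x (Y x) (Z x) := by
  simp [lieObstruction, h₀, h₁]

theorem fderiv_fderiv_sq_smul (L : StrongDual ℝ E) (e x v w : E) :
    fderiv ℝ (fun y => fderiv ℝ (fun y => (L y * L y) • e) y) x v w = (2 * L v * L w) • e := by
  have hX : ∀ y, fderiv ℝ (fun y => (L y * L y) • e) y = (2 * L y) • L.smulRight e := by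
    intro y
    have hL : HasFDerivAt (fun y => (L y * L y) • e) ((L y • L + L y • L).smulRight e) y :=
      (L.hasFDerivAt.mul L.hasFDerivAt).smul_const e
    rw [hL.fderiv]
    ext u
    simp only [ContinuousLinearMap.smulRight_apply, add_apply,
      smul_apply, smul_eq_mul, smul_smul]
    ring_nf
  have hX' := ((L.hasFDerivAt (x := x)).const_mul (2 : ℝ)).smul_const (L.smulRight e)
  rw [funext hX, hX'.fderiv]
  simp [smul_smul]

theorem not_forall_lieObstruction_eq_zero [Nontrivial E] (x : E) :
    ¬ ∀ X Y Z : E → E, ContDiff ℝ (⊤ : ℕ∞) X → ContDiff ℝ (⊤ : ℕ∞) Y → ContDiff ℝ (⊤ : ℕ∞) Z →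
      lieObstruction Γ X Y Z x = 0 := by
  intro h
  have h₁ : fderiv ℝ Γ x = 0 := by
    ext v a b
    simpa [lieObstruction_const] using h _ _ _ contDiff_const contDiff_const contDiff_const
  have h₀ : Γ x = 0 := by
    ext a b
    simpa [lieObstruction_id, h₁] using h _ _ _ contDiff_id contDiff_const contDiff_const
  obtain ⟨e, he⟩ := exists_ne (0 : E)
  obtain ⟨L, hL⟩ := SeparatingDual.exists_ne_zero (R := ℝ) he
  have hquad := h (fun y => (L y * L y) • e) (fun _ => e) (fun _ => e)
    ((L.contDiff.mul L.contDiff).smul contDiff_const) contDiff_const contDiff_const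
  rw [lieObstruction_of_eq_zero_of_fderiv_eq_zero Γ h₀ h₁, fderiv_fderiv_sq_smul] at hquad
  simp [hL, he] at hquad

theorem no_christoffel_kills_lie_derivative_obstruction_general
    {n : ℕ} (hn : 0 < n) (U : Set (EuclideanSpace ℝ (Fin n)))
    (hne : U.Nonempty)
    (Γ : EuclideanSpace ℝ (Fin n) →
      EuclideanSpace ℝ (Fin n) →L[ℝ] EuclideanSpace ℝ (Fin n) →L[ℝ] EuclideanSpace ℝ (Fin n))
    (h : ∀ X Y Z : EuclideanSpace ℝ (Fin n) → EuclideanSpace ℝ (Fin n),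
      ContDiffOn ℝ (⊤ : ℕ∞) X U → ContDiffOn ℝ (⊤ : ℕ∞) Y U → ContDiffOn ℝ (⊤ : ℕ∞) Z U →
      ∀ x ∈ U,
        -(fderiv ℝ (fun y => fderiv ℝ X y) x (Y x) (Z x))
          + fderiv ℝ X x (Γ x (Y x) (Z x))
          - fderiv ℝ Γ x (X x) (Y x) (Z x)
          - Γ x (fderiv ℝ X x (Y x)) (Z x)
          - Γ x (Y x) (fderiv ℝ X x (Z x)) = 0) :
    False := by
  obtain ⟨x, hx⟩ := hne
  have : Nonempty (Fin n) := ⟨⟨0, hn⟩⟩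
  exact not_forall_lieObstruction_eq_zero Γ x fun X Y Z hX hY hZ =>
    h X Y Z hX.contDiffOn hY.contDiffOn hZ.contDiffOn x hx

/-- There is no smooth Christoffel symbol `Γ` on a nonempty open `U ⊆ ℝⁿ`
(`n ≥ 1`) such that for all smooth vector fields `X, Y, Z` and all `x ∈ U`
`−X''(x)(Y(x),Z(x)) + X'(x)·Γ(x)(Y(x),Z(x)) − (Γ'(x)·X(x))(Y(x),Z(x))
  − Γ(x)(X'(x)Y(x), Z(x)) − Γ(x)(Y(x), X'(x)Z(x)) = 0`:
the hypothesis leads to a contradiction. -/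
theorem no_christoffel_kills_lie_derivative_obstruction
    {n : ℕ} (hn : 0 < n) (U : Set (EuclideanSpace ℝ (Fin n))) (hU : IsOpen U)
    (hne : U.Nonempty)
    (Γ : EuclideanSpace ℝ (Fin n) →
      EuclideanSpace ℝ (Fin n) →L[ℝ] EuclideanSpace ℝ (Fin n) →L[ℝ] EuclideanSpace ℝ (Fin n))
    (hΓ : ContDiffOn ℝ (⊤ : ℕ∞) Γ U)
    (h : ∀ X Y Z : EuclideanSpace ℝ (Fin n) → EuclideanSpace ℝ (Fin n),
      ContDiffOn ℝ (⊤ : ℕ∞) X U → ContDiffOn ℝ (⊤ : ℕ∞) Y U → ContDiffOn ℝ (⊤ : ℕ∞) Z U →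
      ∀ x ∈ U,
        -(fderiv ℝ (fun y => fderiv ℝ X y) x (Y x) (Z x))
          + fderiv ℝ X x (Γ x (Y x) (Z x))
          - fderiv ℝ Γ x (X x) (Y x) (Z x)
          - Γ x (fderiv ℝ X x (Y x)) (Z x)
          - Γ x (Y x) (fderiv ℝ X x (Z x)) = 0) :
    False :=
  no_christoffel_kills_lie_derivative_obstruction_general hn U hne Γ h
end
end

section
/- For every n ≥ 1 and every q ∈ ℕ there exists a smooth compactly supported function φ₁ on [0,∞), constant in a neighborhood of 0, such that ∫₀^∞ s^{j/n} φ₁(s) ds equals n/ωₙ for j = 0 and equals 0 for j = 1, 2, …, q, where ωₙ is the surface area of the unit sphere in ℝⁿ. Consequently φ(x) := φ₁(‖x‖ⁿ) is a smooth compactly supported function on ℝⁿ with ∫ φ = 1 and vanishing moments ∫ x^α φ(x) dx = 0 for all multi-indices α with 1 ≤ |α| ≤ q. -/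
/-!
A bump `ψ ≥ 0` supported in `(1, 2)` makes the moment matrix `(∫ t^(j+k) ψ)_{j,k ≤ q}`
nondegenerate: if it kills `c`, then `∫ P² ψ = 0` for `P = ∑ c_k t^k`, so `P` vanishes on the
open set `{ψ ≠ 0}` and `c = 0`. Hence some `u = P ψ` has any prescribed moments
`∫ t^j u(t) dt`, `j ≤ q`. The radial profile `φ₁(s) = s^(1/n - 1) u(s^(1/n)) / n` is the
push-forward of `u` under `r ↦ rⁿ`, so `∫ s^(j/n) φ₁(s) ds = ∫ r^j u(r) dr`, and in polar
coordinates `∫ x^α φ₁(‖x‖ⁿ) dx` is an angular integral times `(1/n) ∫ r^|α| u(r) dr`. As `u`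
vanishes near `0`, so do `φ₁` and `φ₁(‖·‖ⁿ)`, which makes both smooth.
-/

open MeasureTheory

noncomputable section

/-- The surface area `ωₙ` of the unit sphere in `ℝⁿ`, i.e. `n` times the volume of the unit
ball. -/
def sphereArea (n : ℕ) : ℝ :=
  n * (volume (Metric.ball (0 : EuclideanSpace ℝ (Fin n)) 1)).toReal

open Set Filter Topology Function Metric Matrix Polynomial
open scoped ContDiff

theorem eq_zero_of_forall_sum_mul_pow_eq_zero {R : Type*} [CommRing R] [IsDomain R] {m : ℕ}
    {s : Set R} (hs : s.Infinite) {c : Fin m → R} (h : ∀ t ∈ s, ∑ k, c k * t ^ (k : ℕ) = 0) :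
    c = 0 := by
  set p : R[X] := ∑ k, C (c k) * X ^ (k : ℕ)
  have hp : p = 0 := p.eq_zero_of_infinite_isRoot <| hs.mono fun t ht => by
    simpa [p, eval_finsetSum] using h t ht
  funext k
  simpa [p, finsetSum_coeff, coeff_C_mul, coeff_X_pow, Fin.val_inj] using congrArg (coeff · k) hp

def momentMatrix (ψ : ℝ → ℝ) (m : ℕ) : Matrix (Fin m) (Fin m) ℝ :=
  fun j k => ∫ t, t ^ (j + k : ℕ) * ψ t

section Moments

variable {ψ : ℝ → ℝ} {m : ℕ}

theorem momentMatrix_mulVec (hψ : Continuous ψ) (hψc : HasCompactSupport ψ) (c : Fin m → ℝ)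
    (j : Fin m) :
    (momentMatrix ψ m *ᵥ c) j = ∫ t, t ^ (j : ℕ) * (∑ k, c k * t ^ (k : ℕ)) * ψ t := by
  have hint : ∀ k : ℕ, Integrable fun t => t ^ k * ψ t := fun k =>
    ((continuous_pow k).mul hψ).integrable_of_hasCompactSupport hψc.mul_left
  simp only [mulVec, dotProduct, momentMatrix, Finset.mul_sum, Finset.sum_mul]
  rw [integral_finsetSum _ fun k _ => ?_]
  · refine Finset.sum_congr rfl fun k _ => ?_
    rw [← integral_mul_const]
    congr 1 with t
    ring
  · exact ((hint (j + k)).const_mul (c k)).congr (.of_forall fun t => by ring)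

theorem momentMatrix_mulVec_injective (hψ : Continuous ψ) (hψc : HasCompactSupport ψ)
    (hψ0 : 0 ≤ ψ) (hψne : ψ ≠ 0) : Injective (momentMatrix ψ m).mulVec := by
  rw [← Matrix.coe_mulVecLin, injective_iff_map_eq_zero]
  intro c hc
  rw [Matrix.mulVecLin_apply] at hc
  set P : ℝ → ℝ := fun t => ∑ k, c k * t ^ (k : ℕ)
  have hP : Continuous P := by fun_prop
  have hint : ∫ t, P t ^ 2 * ψ t = 0 := by
    have hsq : ∫ t, P t ^ 2 * ψ t = ∑ j, c j * ∫ t, t ^ (j : ℕ) * P t * ψ t := by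
      simp_rw [← integral_const_mul]
      have hi : ∀ j : Fin m, Integrable fun t => c j * (t ^ (j : ℕ) * P t * ψ t) := fun j =>
        ((((continuous_pow _).mul hP).mul hψ).integrable_of_hasCompactSupport
          hψc.mul_left).const_mul _
      rw [← integral_finsetSum _ fun j _ => hi j]
      congr 1 with t
      simp only [P, sq, Finset.sum_mul]
      exact Finset.sum_congr rfl fun j _ => by ring
    rw [hsq, ← dotProduct_zero c, ← hc]
    simp only [dotProduct, momentMatrix_mulVec hψ hψc, P]
  have hzero : ∀ t, P t ^ 2 * ψ t = 0 := by
    by_contra! ⟨t, ht⟩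
    have hcs : HasCompactSupport (fun t => P t ^ 2 * ψ t) := hψc.mul_left
    have hcont : Continuous (fun t => P t ^ 2 * ψ t) := (hP.pow 2).mul hψ
    have hnn : 0 ≤ fun t => P t ^ 2 * ψ t := fun t => mul_nonneg (sq_nonneg _) (hψ0 t)
    exact (hcont.integral_pos_of_hasCompactSupport_nonneg_nonzero hcs hnn ht).ne' hint
  refine eq_zero_of_forall_sum_mul_pow_eq_zero (s := support ψ) ?_ fun t ht => ?_
  · obtain ⟨t, ht⟩ := Function.support_nonempty_iff.mpr hψne
    exact infinite_of_mem_nhds t (hψ.isOpen_support.mem_nhds ht)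
  · exact pow_eq_zero_iff two_ne_zero |>.mp ((mul_eq_zero.mp (hzero t)).resolve_right ht)

theorem exists_polynomial_mul_moments_eq (hψ : Continuous ψ) (hψc : HasCompactSupport ψ)
    (hψ0 : 0 ≤ ψ) (hψne : ψ ≠ 0) (b : Fin m → ℝ) :
    ∃ c : Fin m → ℝ, ∀ j : Fin m, ∫ t, t ^ (j : ℕ) * (∑ k, c k * t ^ (k : ℕ)) * ψ t = b j := by
  have hinj := momentMatrix_mulVec_injective (m := m) hψ hψc hψ0 hψne
  obtain ⟨c, hc⟩ := mulVec_surjective_iff_isUnit.mpr (mulVec_injective_iff_isUnit.mp hinj) b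
  exact ⟨c, fun j => (momentMatrix_mulVec hψ hψc c j).symm.trans (congrFun hc j)⟩

end Moments

theorem exists_contDiff_support_subset_Ioo_integral_pow_mul_eq {a b : ℝ} (hab : a < b)
    (moment : ℕ → ℝ) (q : ℕ) : ∃ u : ℝ → ℝ, ContDiff ℝ ∞ u ∧ support u ⊆ Ioo a b ∧
      ∀ j ≤ q, ∫ t, t ^ j * u t = moment j := by
  let ψ : ContDiffBump ((a + b) / 2) := ⟨(b - a) / 4, (b - a) / 2, by linarith, by linarith⟩
  have hψne : (ψ : ℝ → ℝ) ≠ 0 := fun h => by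
    simpa [ψ.one_of_mem_closedBall (mem_closedBall_self ψ.rIn_pos.le)] using
      congrFun h ((a + b) / 2)
  obtain ⟨c, hc⟩ := exists_polynomial_mul_moments_eq ψ.continuous ψ.hasCompactSupport
    (fun _ => ψ.nonneg) hψne fun j : Fin (q + 1) => moment j
  refine ⟨fun t => (∑ k, c k * t ^ (k : ℕ)) * ψ t, ?_, ?_, fun j hj => ?_⟩
  · exact (ContDiff.sum fun k _ => contDiff_const.mul (contDiff_id.pow _)).mul ψ.contDiff
  · refine (support_mul_subset_right _ _).trans_eq ?_
    rw [ψ.support_eq, Real.ball_eq_Ioo]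
    congr 1 <;> simp only [ψ] <;> ring
  · simpa only [mul_assoc] using hc ⟨j, Nat.lt_succ_of_le hj⟩

theorem exists_contDiff_hasCompactSupport_setIntegral_pow_mul_eq (moment : ℕ → ℝ) (q : ℕ) :
    ∃ u : ℝ → ℝ, ContDiff ℝ ∞ u ∧ HasCompactSupport u ∧ u =ᶠ[𝓝 0] 0 ∧
      ∀ j ≤ q, ∫ t in Ioi 0, t ^ j * u t = moment j := by
  obtain ⟨u, hu, hsupp, hmom⟩ :=
    exists_contDiff_support_subset_Ioo_integral_pow_mul_eq one_lt_two moment q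
  refine ⟨u, hu, .of_support_subset_isCompact isCompact_Icc (hsupp.trans Ioo_subset_Icc_self),
    ?_, fun j hj => ?_⟩
  · filter_upwards [Iio_mem_nhds one_pos] with t ht
    exact notMem_support.mp fun h => (hsupp h).1.not_gt ht
  · rw [setIntegral_eq_integral_of_forall_compl_eq_zero fun t ht => ?_, hmom j hj]
    rw [notMem_support.mp fun h => ht (zero_lt_one.trans (hsupp h).1), mul_zero]

theorem HasCompactSupport.comp_of_tendsto_cocompact {X Y M : Type*} [TopologicalSpace X]
    [TopologicalSpace Y] [T2Space X] [T2Space Y] [Zero M] {f : Y → M} {g : X → Y}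
    (hf : HasCompactSupport f) (hg : Tendsto g (cocompact X) (cocompact Y)) :
    HasCompactSupport (f ∘ g) := by
  rw [hasCompactSupport_iff_eventuallyEq, coclosedCompact_eq_cocompact] at hf ⊢
  exact hg.eventually hf

-- Extended evenly to `s < 0`, so that it is smooth on all of `ℝ` when `u` vanishes near `0`.
def radialProfile (n : ℕ) (u : ℝ → ℝ) (s : ℝ) : ℝ :=
  (n : ℝ)⁻¹ * |s| ^ ((n : ℝ)⁻¹ - 1) * u (|s| ^ (n : ℝ)⁻¹)

section RadialProfile

variable {n : ℕ} {u : ℝ → ℝ}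

theorem pow_mul_radialProfile_pow (hn : n ≠ 0) {r : ℝ} (hr : 0 < r) :
    r ^ (n - 1) * radialProfile n u (r ^ n) = u r / n := by
  have hrn : 0 < r ^ n := pow_pos hr n
  rw [radialProfile, abs_of_pos hrn, Real.rpow_sub hrn, Real.rpow_one,
    Real.pow_rpow_inv_natCast hr.le hn]
  have hpow : r ^ (n - 1) * r = r ^ n := by
    rw [← pow_succ, Nat.sub_add_cancel (Nat.pos_of_ne_zero hn)]
  field_simp
  rw [hpow]

theorem setIntegral_rpow_mul_radialProfile (hn : n ≠ 0) (j : ℕ) :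
    ∫ s in Ioi 0, s ^ ((j : ℝ) / n) * radialProfile n u s = ∫ r in Ioi 0, r ^ j * u r := by
  have hn' : (n : ℝ) ≠ 0 := Nat.cast_ne_zero.mpr hn
  rw [← integral_comp_rpow_Ioi _ hn']
  refine setIntegral_congr_fun measurableSet_Ioi fun r (hr : 0 < r) => ?_
  have hsub : r ^ ((n : ℝ) - 1) = r ^ (n - 1) := by
    rw [← Real.rpow_natCast, Nat.cast_sub (Nat.one_le_iff_ne_zero.mpr hn), Nat.cast_one]
  rw [smul_eq_mul, Real.rpow_natCast, hsub, ← Real.rpow_natCast r n, ← Real.rpow_mul hr.le,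
    mul_div_cancel₀ _ hn', Real.rpow_natCast, Real.rpow_natCast, Nat.abs_cast]
  calc (n : ℝ) * r ^ (n - 1) * (r ^ j * radialProfile n u (r ^ n))
      = n * r ^ j * (r ^ (n - 1) * radialProfile n u (r ^ n)) := by ring
    _ = r ^ j * u r := by rw [pow_mul_radialProfile_pow hn hr]; field_simp

theorem setIntegral_pow_mul_radialProfile_pow (hn : n ≠ 0) (m : ℕ) :
    ∫ r in Ioi 0, r ^ (n - 1) * (r ^ m * radialProfile n u (r ^ n)) =
      (∫ r in Ioi 0, r ^ m * u r) / n := by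
  rw [← integral_div]
  refine setIntegral_congr_fun measurableSet_Ioi fun r (hr : 0 < r) => ?_
  rw [mul_left_comm, pow_mul_radialProfile_pow hn hr, mul_div_assoc]

theorem radialProfile_eventuallyEq_zero (hn : n ≠ 0) (hu : u =ᶠ[𝓝 0] 0) :
    radialProfile n u =ᶠ[𝓝 0] 0 := by
  have hcont : Tendsto (fun s : ℝ => |s| ^ (n : ℝ)⁻¹) (𝓝 0) (𝓝 0) := by
    have := continuous_abs.rpow_const fun _ => Or.inr (inv_nonneg.mpr (Nat.cast_nonneg n))
    exact this.tendsto' 0 0 (by simp [Real.zero_rpow (inv_ne_zero (Nat.cast_ne_zero.mpr hn))])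
  filter_upwards [hcont.eventually hu] with s hs
  simp [radialProfile, hs]

theorem contDiff_radialProfile (hn : n ≠ 0) {k : ℕ∞} (hu : ContDiff ℝ k u)
    (hu0 : u =ᶠ[𝓝 0] 0) : ContDiff ℝ k (radialProfile n u) := by
  refine contDiff_iff_contDiffAt.mpr fun s => ?_
  rcases eq_or_ne s 0 with rfl | hs
  · exact contDiffAt_const.congr_of_eventuallyEq (radialProfile_eventuallyEq_zero hn hu0)
  · have habs : ContDiffAt ℝ k (|·|) s := contDiffAt_abs hs
    have hpow : ∀ p : ℝ, ContDiffAt ℝ k (fun s : ℝ => |s| ^ p) s := fun p =>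
      (Real.contDiffAt_rpow_const_of_ne (abs_ne_zero.mpr hs)).comp s habs
    exact (contDiffAt_const.mul (hpow _)).mul (hu.contDiffAt.comp s (hpow _))

theorem hasCompactSupport_radialProfile (hn : n ≠ 0) (hu : HasCompactSupport u) :
    HasCompactSupport (radialProfile n u) := by
  have hg : Tendsto (fun s : ℝ => |s| ^ (n : ℝ)⁻¹) (cocompact ℝ) (cocompact ℝ) :=
    ((tendsto_rpow_atTop (by positivity)).comp tendsto_norm_cocompact_atTop).mono_right
      atTop_le_cocompact
  exact (hu.comp_of_tendsto_cocompact hg).mul_left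

end RadialProfile

section Polar

variable {E : Type*} [NormedAddCommGroup E] [InnerProductSpace ℝ E] [FiniteDimensional ℝ E]
  [MeasurableSpace E] [BorelSpace E] [Nontrivial E] (μ : Measure E) [μ.IsAddHaarMeasure]

theorem integral_mul_fun_norm_of_homogeneous {f : E → ℝ} {m : ℕ}
    (hf : ∀ (c : ℝ) (x : E), 0 < c → f (c • x) = c ^ m * f x) (g : ℝ → ℝ) :
    ∫ x, f x * g ‖x‖ ∂μ = (∫ θ, f θ ∂μ.toSphere) *
      ∫ r in Ioi (0 : ℝ), r ^ (Module.finrank ℝ E - 1) * (r ^ m * g r) := by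
  calc ∫ x, f x * g ‖x‖ ∂μ
      = ∫ x : ({0}ᶜ : Set E), f x * g ‖(x : E)‖ ∂(μ.comap (↑)) := by
        rw [integral_subtype_comap (measurableSet_singleton _).compl fun x => f x * g ‖x‖,
          restrict_compl_singleton]
    _ = ∫ p : sphere (0 : E) 1 × Ioi (0 : ℝ), f p.1 * ((p.2 : ℝ) ^ m * g p.2)
          ∂(μ.toSphere.prod (.volumeIoiPow (Module.finrank ℝ E - 1))) := by
        rw [← μ.measurePreserving_homeomorphUnitSphereProd.integral_comp
          (Homeomorph.measurableEmbedding _)]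
        refine integral_congr_ae (.of_forall fun ⟨x, hx⟩ => ?_)
        have hx0 : 0 < ‖x‖ := norm_pos_iff.mpr hx
        simp only [homeomorphUnitSphereProd_apply_fst_coe, homeomorphUnitSphereProd_apply_snd_coe]
        have hfx := hf ‖x‖ (‖x‖⁻¹ • x) hx0
        rw [smul_inv_smul₀ hx0.ne'] at hfx
        rw [hfx]
        ring
    _ = (∫ θ, f θ ∂μ.toSphere) *
          ∫ r : Ioi (0 : ℝ), (r : ℝ) ^ m * g r ∂(.volumeIoiPow (Module.finrank ℝ E - 1)) :=
        integral_prod_mul (f := fun θ : sphere (0 : E) 1 => f θ)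
          (g := fun r : Ioi (0 : ℝ) => (r : ℝ) ^ m * g r)
    _ = _ := by
        congr 1
        simp only [Measure.volumeIoiPow, ENNReal.ofReal]
        rw [integral_withDensity_eq_integral_smul
            ((measurable_subtype_coe.pow_const _).real_toNNReal),
          integral_subtype_comap measurableSet_Ioi
            (fun r : ℝ => Real.toNNReal (r ^ (Module.finrank ℝ E - 1)) • (r ^ m * g r))]
        refine setIntegral_congr_fun measurableSet_Ioi fun r (hr : 0 < r) => ?_
        rw [NNReal.smul_def, Real.coe_toNNReal _ (pow_nonneg hr.le _), smul_eq_mul]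

variable {n : ℕ} {u : ℝ → ℝ}

theorem integral_radialProfile_norm_pow (hn : Module.finrank ℝ E = n) :
    ∫ x, radialProfile n u (‖x‖ ^ n) ∂μ = μ.real (ball 0 1) * ∫ r in Ioi 0, u r := by
  have hn0 : n ≠ 0 := hn ▸ Module.finrank_pos.ne'
  have hradial := setIntegral_pow_mul_radialProfile_pow (u := u) hn0 0
  simp only [pow_zero, one_mul] at hradial
  rw [integral_fun_norm_addHaar μ fun r => radialProfile n u (r ^ n), hn, nsmul_eq_mul,
    smul_eq_mul]
  simp only [smul_eq_mul, hradial]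
  field_simp

theorem integral_mul_radialProfile_norm_pow_of_homogeneous (hn : Module.finrank ℝ E = n)
    {f : E → ℝ} {m : ℕ} (hf : ∀ (c : ℝ) (x : E), 0 < c → f (c • x) = c ^ m * f x) :
    ∫ x, f x * radialProfile n u (‖x‖ ^ n) ∂μ =
      (∫ θ, f θ ∂μ.toSphere) * ((∫ r in Ioi 0, r ^ m * u r) / n) := by
  rw [integral_mul_fun_norm_of_homogeneous μ hf fun r => radialProfile n u (r ^ n), hn,
    setIntegral_pow_mul_radialProfile_pow (hn ▸ Module.finrank_pos.ne')]

end Polar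

theorem contDiff_comp_norm {E : Type*} [NormedAddCommGroup E] [InnerProductSpace ℝ E] {k : ℕ∞}
    {f : ℝ → ℝ} {c : ℝ} (hf : ContDiff ℝ k f) (hf0 : ∀ᶠ r in 𝓝 0, f r = c) :
    ContDiff ℝ k fun x : E => f ‖x‖ := by
  refine contDiff_iff_contDiffAt.mpr fun x => ?_
  rcases eq_or_ne x 0 with rfl | hx
  · have : ∀ᶠ y in 𝓝 (0 : E), f ‖y‖ = c := by
      simpa using (continuous_norm.tendsto' (0 : E) 0 norm_zero).eventually hf0
    exact contDiffAt_const.congr_of_eventuallyEq this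
  · exact hf.contDiffAt.comp x (contDiffAt_norm ℝ hx)

theorem EuclideanSpace.prod_smul_pow {ι : Type*} [Fintype ι] (α : ι → ℕ) (c : ℝ)
    (x : EuclideanSpace ℝ ι) : ∏ i, (c • x) i ^ α i = c ^ (∑ i, α i) * ∏ i, x i ^ α i := by
  simp only [PiLp.smul_apply, smul_eq_mul, mul_pow, Finset.prod_mul_distrib,
    Finset.prod_pow_eq_pow_sum]

/-- For every `n ≥ 1` and `q ∈ ℕ` there is a smooth compactly supported
`φ₁` on `[0,∞)`, constant near `0`, with `∫₀^∞ s^{j/n} φ₁(s) ds = n/ωₙ` for `j = 0` and `= 0`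
for `j = 1,…,q`.  Consequently `φ(x) := φ₁(‖x‖ⁿ)` is a smooth compactly supported function on
`ℝⁿ` with `∫ φ = 1` and vanishing moments `∫ x^α φ(x) dx = 0` for `1 ≤ |α| ≤ q`. -/
theorem exists_radial_mollifier_with_vanishing_moments (n : ℕ) (hn : 1 ≤ n) (q : ℕ) :
    ∃ φ₁ : ℝ → ℝ, ContDiff ℝ (⊤ : ℕ∞) φ₁ ∧ HasCompactSupport φ₁ ∧
      (∃ δ > (0 : ℝ), ∀ s : ℝ, |s| < δ → φ₁ s = φ₁ 0) ∧
      (∀ j : ℕ, j ≤ q →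
        (∫ s in Set.Ioi (0 : ℝ), s ^ ((j : ℝ) / n) * φ₁ s) =
          if j = 0 then n / sphereArea n else 0) ∧
      ContDiff ℝ (⊤ : ℕ∞) (fun x : EuclideanSpace ℝ (Fin n) => φ₁ (‖x‖ ^ n)) ∧
      HasCompactSupport (fun x : EuclideanSpace ℝ (Fin n) => φ₁ (‖x‖ ^ n)) ∧
      (∫ x : EuclideanSpace ℝ (Fin n), φ₁ (‖x‖ ^ n)) = 1 ∧
      (∀ α : Fin n → ℕ, 1 ≤ ∑ i, α i → ∑ i, α i ≤ q →
        (∫ x : EuclideanSpace ℝ (Fin n), (∏ i, x i ^ α i) * φ₁ (‖x‖ ^ n)) = 0) := by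
  have hn0 : n ≠ 0 := Nat.one_le_iff_ne_zero.mp hn
  have : NeZero n := ⟨hn0⟩
  obtain ⟨u, hu, hucs, hu0, hmom⟩ := exists_contDiff_hasCompactSupport_setIntegral_pow_mul_eq
    (fun j => if j = 0 then n / sphereArea n else 0) q
  have hφ : ContDiff ℝ (⊤ : ℕ∞) (radialProfile n u) := contDiff_radialProfile hn0 hu hu0
  have hφ0 : radialProfile n u =ᶠ[𝓝 0] 0 := radialProfile_eventuallyEq_zero hn0 hu0
  have hφc : HasCompactSupport (radialProfile n u) := hasCompactSupport_radialProfile hn0 hucs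
  refine ⟨radialProfile n u, hφ, hφc, ?_,
    fun j hj => (setIntegral_rpow_mul_radialProfile hn0 j).trans (hmom j hj), ?_, ?_, ?_,
    fun α hα hαq => ?_⟩
  · obtain ⟨δ, hδ, h⟩ := Metric.eventually_nhds_iff.mp hφ0
    exact ⟨δ, hδ, fun s hs => (h (by simpa using hs)).trans (@h 0 (by simpa using hδ)).symm⟩
  · exact contDiff_comp_norm (hφ.comp (contDiff_id.pow n))
      (((continuous_pow n).tendsto' 0 0 (zero_pow hn0)).eventually hφ0)
  · exact hφc.comp_of_tendsto_cocompact <| ((tendsto_pow_atTop hn0).comp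
      tendsto_norm_cocompact_atTop).mono_right atTop_le_cocompact
  · have hball : volume.real (ball (0 : EuclideanSpace ℝ (Fin n)) 1) ≠ 0 :=
      (ENNReal.toReal_pos (measure_ball_pos _ _ one_pos).ne' measure_ball_lt_top.ne).ne'
    have hmom0 := hmom 0 q.zero_le
    simp only [pow_zero, one_mul, if_pos] at hmom0
    rw [integral_radialProfile_norm_pow volume finrank_euclideanSpace_fin, hmom0, sphereArea,
      ← measureReal_def]
    field_simp
  · rw [integral_mul_radialProfile_norm_pow_of_homogeneous volume finrank_euclideanSpace_fin
      (fun c x _ => EuclideanSpace.prod_smul_pow α c x), hmom _ hαq, if_neg (by omega),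
      zero_div, mul_zero]
end
end

section
/- Let P ∈ D'(ℝ) be the distribution ⟨P, ω⟩ = lim_{δ→0} ∫_δ^∞ t^{n−2}(ω(t) − ω(−t)) dt (for n = 1 this is the principal value of 1/t; for n ≥ 2 it is the locally integrable function sign(t)|t|^{n−2}). Let f be a smooth function on a neighborhood of 0 in ℝ, let χ be a smooth bump function equal to 1 near 0, and let φ(x) = φ₁(|x|ⁿ) with φ₁ as in the moment lemma (∫₀^∞ s^{j/n}φ₁(s)ds = n/ωₙ for j=0 and 0 for 1 ≤ j ≤ q). Then for ε → 0, ⟨P, χ·f·ε^{−n}φ₁(tⁿ/εⁿ)⟩ = (2/ωₙ)·f'(0) + O(ε^q). -/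
open MeasureTheory

noncomputable section

/-!
For `t > 0` and `ε` small, `χ = 1` on the support of the rescaled profile, so the pairing is
`∫₀^∞ t^{n-2} ε^{-n} φ₁(tⁿ/εⁿ) (f(t) - f(-t)) dt`. Expand the odd part `f(t) - f(-t)` by Taylor
to order `q + 1`; its constant term vanishes. The substitution `t = ε s^{1/n}` turns the term in
`t^{j+1}` into `ε^j / n` times the `j`-th moment of `φ₁`, so the moment conditions keep only
`j = 0`, which contributes `2 f'(0) / ωₙ`. If `φ₁ = 0` beyond `ρ`, everything lives on
`0 < t ≤ ρ ε`, so the Taylor remainder `O(t^{q+2})` contributes `O(ε^{q+1})`.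
-/

open Set

/-- The trace `ε⁻ⁿ φ(tⁿ/εⁿ)` of the rescaled mollifier `S_ε φ` on a coordinate axis, for the
radial profile `φ(|x|ⁿ)`. -/
def mollifierTrace (n : ℕ) (ε : ℝ) (φ : ℝ → ℝ) (t : ℝ) : ℝ := (ε ^ n)⁻¹ * φ (t ^ n / ε ^ n)

lemma HasCompactSupport.exists_one_le_and_eq_zero_of_le {φ : ℝ → ℝ} (hφ : HasCompactSupport φ) :
    ∃ ρ, 1 ≤ ρ ∧ ∀ s, ρ ≤ s → φ s = 0 := by
  obtain ⟨R, -, hR⟩ := hφ.exists_pos_le_norm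
  exact ⟨max R 1, le_max_right _ _, fun s hs =>
    hR s ((le_max_left _ _).trans (hs.trans (le_abs_self s)))⟩

lemma zpow_sub_two_mul_pow {t : ℝ} (ht : t ≠ 0) {n k : ℕ} (h : 2 ≤ n + k) :
    t ^ ((n : ℤ) - 2) * t ^ k = t ^ (n + k - 2) := by
  rw [← zpow_natCast, ← zpow_add₀ ht, ← zpow_natCast]
  congr 1
  omega

section Mollifier

variable {n : ℕ} {ε ρ : ℝ} {φ : ℝ → ℝ}

lemma integral_Ioi_pow_mul_comp_pow (hn : n ≠ 0) (j : ℕ) :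
    ∫ u in Ioi 0, u ^ (n - 1 + j) * φ (u ^ n) =
      (n : ℝ)⁻¹ * ∫ s in Ioi 0, s ^ ((j : ℝ) / n) * φ s := by
  have hn' : (n : ℝ) ≠ 0 := by exact_mod_cast hn
  calc ∫ u in Ioi 0, u ^ (n - 1 + j) * φ (u ^ n)
      = ∫ u in Ioi 0, (|(n : ℝ)| * u ^ ((n : ℝ) - 1)) •
          ((n : ℝ)⁻¹ * ((u ^ (n : ℝ)) ^ ((j : ℝ) / n) * φ (u ^ (n : ℝ)))) := by
        refine setIntegral_congr_fun measurableSet_Ioi fun u (hu : 0 < u) => ?_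
        obtain ⟨m, rfl⟩ := Nat.exists_eq_add_one_of_ne_zero hn
        rw [← Real.rpow_mul hu.le, mul_div_cancel₀ _ hn', Real.rpow_natCast, Real.rpow_natCast,
          Real.rpow_sub_one hu.ne', Real.rpow_natCast, abs_of_pos (by positivity), smul_eq_mul,
          Nat.add_sub_cancel]
        field_simp
        ring
    _ = (n : ℝ)⁻¹ * ∫ s in Ioi 0, s ^ ((j : ℝ) / n) * φ s := by
        rw [integral_comp_rpow_Ioi (fun s => (n : ℝ)⁻¹ * (s ^ ((j : ℝ) / n) * φ s)) hn',
          integral_const_mul]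

lemma integral_Ioi_pow_mul_mollifierTrace (hn : n ≠ 0) (hε : 0 < ε) (j : ℕ) :
    ∫ t in Ioi 0, t ^ (n - 1 + j) * mollifierTrace n ε φ t =
      ε ^ j / n * ∫ s in Ioi 0, s ^ ((j : ℝ) / n) * φ s := by
  have h := integral_comp_mul_left_Ioi (fun t => t ^ (n - 1 + j) * mollifierTrace n ε φ t) 0 hε
  rw [mul_zero, smul_eq_mul] at h
  calc ∫ t in Ioi 0, t ^ (n - 1 + j) * mollifierTrace n ε φ t
      = ε * ∫ u in Ioi 0, (ε * u) ^ (n - 1 + j) * mollifierTrace n ε φ (ε * u) := by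
        rw [h, mul_inv_cancel_left₀ hε.ne']
    _ = ε * ∫ u in Ioi 0, ε ^ (n - 1 + j) * (ε ^ n)⁻¹ * (u ^ (n - 1 + j) * φ (u ^ n)) := by
        congr 1
        refine integral_congr_ae (ae_of_all _ fun u => ?_)
        simp only [mollifierTrace, mul_pow, mul_div_cancel_left₀ _ (pow_ne_zero n hε.ne')]
        ring
    _ = ε ^ j / n * ∫ s in Ioi 0, s ^ ((j : ℝ) / n) * φ s := by
        rw [integral_const_mul, integral_Ioi_pow_mul_comp_pow hn]
        obtain ⟨m, rfl⟩ := Nat.exists_eq_add_one_of_ne_zero hn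
        simp only [Nat.add_sub_cancel]
        field_simp
        ring

lemma comp_pow_div_pow_eq_zero {t : ℝ} (hn : n ≠ 0) (hε : 0 < ε) (hρ : 1 ≤ ρ)
    (hφρ : ∀ s, ρ ≤ s → φ s = 0) (ht : ρ * ε ≤ t) : φ (t ^ n / ε ^ n) = 0 := by
  have hρt : ρ ≤ t / ε := (le_div_iff₀ hε).2 ht
  rw [← div_pow]
  exact hφρ _ (hρt.trans (le_self_pow₀ (hρ.trans hρt) hn))

lemma abs_mollifierTrace_le {B : ℝ} (hε : 0 < ε) (hB : ∀ s, |φ s| ≤ B) (t : ℝ) :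
    |mollifierTrace n ε φ t| ≤ B / ε ^ n := by
  rw [mollifierTrace, abs_mul, abs_inv, abs_of_pos (pow_pos hε n), inv_mul_eq_div]
  exact div_le_div_of_nonneg_right (hB _) (by positivity)

lemma integrableOn_Ioi_pow_mul_mollifierTrace (hn : n ≠ 0) (hε : 0 < ε) (hφ : Continuous φ)
    (hρ : 1 ≤ ρ) (hφρ : ∀ s, ρ ≤ s → φ s = 0) (m : ℕ) :
    IntegrableOn (fun t => t ^ m * mollifierTrace n ε φ t) (Ioi 0) := by
  have hcont : Continuous fun t => t ^ m * mollifierTrace n ε φ t := by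
    unfold mollifierTrace
    fun_prop
  refine (hcont.integrableOn_Icc (a := 0) (b := ρ * ε)).of_forall_sdiff_eq_zero measurableSet_Ioi
    fun t ⟨(ht : 0 < t), htρ⟩ => ?_
  have : ρ * ε ≤ t := le_of_lt (by simpa [ht.le] using htρ)
  simp [mollifierTrace, comp_pow_div_pow_eq_zero hn hε hρ hφρ this]

lemma integral_Ioi_sum_pow_mul_mollifierTrace {q : ℕ} {μ : ℝ} (hn : n ≠ 0) (hε : 0 < ε)
    (hφ : Continuous φ) (hρ : 1 ≤ ρ) (hφρ : ∀ s, ρ ≤ s → φ s = 0)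
    (hmom : ∀ j ≤ q, ∫ s in Ioi 0, s ^ ((j : ℝ) / n) * φ s = if j = 0 then μ else 0)
    (c : ℕ → ℝ) :
    ∫ t in Ioi 0, ∑ j ∈ Finset.range (q + 1), c j * (t ^ (n - 1 + j) * mollifierTrace n ε φ t) =
      c 0 * μ / n := by
  rw [integral_finsetSum _ fun j _ =>
    (integrableOn_Ioi_pow_mul_mollifierTrace hn hε hφ hρ hφρ _).const_mul _]
  rw [Finset.sum_congr rfl fun j hj => by
    rw [integral_const_mul, integral_Ioi_pow_mul_mollifierTrace hn hε,
      hmom j (Nat.lt_succ_iff.1 (Finset.mem_range.1 hj))]]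
  simp [mul_ite]
  ring

end Mollifier

lemma integrableOn_Ioi_and_abs_integral_le {W : ℝ → ℝ} {a b K : ℝ} (hab : a ≤ b)
    (hW : ContinuousOn W (Ioc a b)) (hK : ∀ t ∈ Ioc a b, |W t| ≤ K)
    (hW0 : ∀ t, b < t → W t = 0) :
    IntegrableOn W (Ioi a) ∧ |∫ t in Ioi a, W t| ≤ K * (b - a) := by
  have hIoc : IntegrableOn W (Ioc a b) :=
    Integrable.of_bound (hW.aestronglyMeasurable measurableSet_Ioc) K
      ((ae_restrict_iff' measurableSet_Ioc).2 (ae_of_all _ hK))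
  have hvanish : ∀ t ∈ Ioi a \ Ioc a b, W t = 0 := fun t ⟨hta, htb⟩ =>
    hW0 t (by simpa [show a < t from hta] using htb)
  refine ⟨hIoc.of_forall_sdiff_eq_zero measurableSet_Ioi hvanish, ?_⟩
  rw [setIntegral_eq_of_subset_of_forall_sdiff_eq_zero measurableSet_Ioi Ioc_subset_Ioi_self
    hvanish, ← Real.volume_real_Ioc_of_le hab]
  exact norm_setIntegral_le_of_norm_le_const (f := W) measure_Ioc_lt_top hK

lemma integrableOn_Ioi_and_abs_integral_zpow_mul_mollifierTrace_sub_le {n q : ℕ}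
    {ε ρ B μ M : ℝ} {φ G : ℝ → ℝ} {c : ℕ → ℝ} (hn : n ≠ 0) (hε : 0 < ε) (hφ : Continuous φ)
    (hρ : 1 ≤ ρ) (hφρ : ∀ s, ρ ≤ s → φ s = 0) (hB : ∀ s, |φ s| ≤ B)
    (hmom : ∀ j ≤ q, ∫ s in Ioi 0, s ^ ((j : ℝ) / n) * φ s = if j = 0 then μ else 0)
    (hG : ContinuousOn G (Ioc 0 (ρ * ε)))
    (hGc : ∀ t ∈ Ioc 0 (ρ * ε),
      |G t - ∑ j ∈ Finset.range (q + 1), c j * t ^ (j + 1)| ≤ M * t ^ (q + 2)) :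
    IntegrableOn (fun t => t ^ ((n : ℤ) - 2) * (mollifierTrace n ε φ t * G t)) (Ioi 0) ∧
      |(∫ t in Ioi 0, t ^ ((n : ℤ) - 2) * (mollifierTrace n ε φ t * G t)) - c 0 * μ / n| ≤
        M * B * ρ ^ (n + q + 1) * ε ^ (q + 1) := by
  set P : ℝ → ℝ := fun t => ∑ j ∈ Finset.range (q + 1), c j * t ^ (j + 1)
  set S : ℝ → ℝ := fun t =>
    ∑ j ∈ Finset.range (q + 1), c j * (t ^ (n - 1 + j) * mollifierTrace n ε φ t)
  set W : ℝ → ℝ := fun t => t ^ ((n : ℤ) - 2) * (mollifierTrace n ε φ t * (G t - P t))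
  have hsplit : EqOn (fun t => t ^ ((n : ℤ) - 2) * (mollifierTrace n ε φ t * G t)) (S + W)
      (Ioi 0) := by
    intro t (ht : 0 < t)
    have hS : S t = t ^ ((n : ℤ) - 2) * (mollifierTrace n ε φ t * P t) := by
      simp only [S, P, Finset.mul_sum]
      refine Finset.sum_congr rfl fun j _ => ?_
      have hpow : t ^ ((n : ℤ) - 2) * t ^ (j + 1) = t ^ (n - 1 + j) := by
        rw [zpow_sub_two_mul_pow ht.ne' (by omega)]
        congr 1
        omega
      rw [← hpow]
      ring
    simp only [Pi.add_apply, hS, W]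
    ring
  have hWcont : ContinuousOn W (Ioc 0 (ρ * ε)) := by
    have : Continuous (mollifierTrace n ε φ) := by
      unfold mollifierTrace
      fun_prop
    exact ((continuousOn_zpow₀ _).mono fun t ht => ht.1.ne').mul
      (this.continuousOn.mul (hG.sub (by fun_prop)))
  have hWbound : ∀ t ∈ Ioc 0 (ρ * ε), |W t| ≤ M * B / ε ^ n * (ρ * ε) ^ (n + q) := by
    rintro t ⟨ht, htρ⟩
    have hM : 0 ≤ M := nonneg_of_mul_nonneg_left ((abs_nonneg _).trans (hGc t ⟨ht, htρ⟩))
      (by positivity)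
    have hB0 : 0 ≤ B := (abs_nonneg _).trans (hB 0)
    calc |W t| = t ^ ((n : ℤ) - 2) * (|mollifierTrace n ε φ t| * |G t - P t|) := by
          simp only [W, abs_mul, abs_of_pos (zpow_pos ht _)]
      _ ≤ t ^ ((n : ℤ) - 2) * (B / ε ^ n * (M * t ^ (q + 2))) := by
          gcongr
          exacts [abs_mollifierTrace_le hε hB t, hGc t ⟨ht, htρ⟩]
      _ = M * B / ε ^ n * t ^ (n + q) := by
          rw [show n + q = n + (q + 2) - 2 by omega, ← zpow_sub_two_mul_pow ht.ne' (by omega)]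
          ring
      _ ≤ M * B / ε ^ n * (ρ * ε) ^ (n + q) := by gcongr
  have hWzero : ∀ t, ρ * ε < t → W t = 0 := fun t ht => by
    simp [W, mollifierTrace, comp_pow_div_pow_eq_zero hn hε hρ hφρ ht.le]
  obtain ⟨hW, hWle⟩ := integrableOn_Ioi_and_abs_integral_le (by positivity) hWcont hWbound hWzero
  have hS : IntegrableOn S (Ioi 0) := integrable_finsetSum _ fun j _ =>
    (integrableOn_Ioi_pow_mul_mollifierTrace hn hε hφ hρ hφρ _).const_mul _
  refine ⟨(hS.add hW).congr_fun hsplit.symm measurableSet_Ioi, ?_⟩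
  have hI : ∫ t in Ioi 0, t ^ ((n : ℤ) - 2) * (mollifierTrace n ε φ t * G t) =
      c 0 * μ / n + ∫ t in Ioi 0, W t := by
    rw [← integral_Ioi_sum_pow_mul_mollifierTrace hn hε hφ hρ hφρ hmom, ← integral_add hS hW]
    exact setIntegral_congr_fun measurableSet_Ioi hsplit
  rw [hI, add_sub_cancel_left]
  refine hWle.trans_eq ?_
  field_simp
  ring

lemma hasDerivAt_sub_comp_neg {f : ℝ → ℝ} (hf : DifferentiableAt ℝ f 0) :
    HasDerivAt (fun t => f t - f (-t)) (2 * deriv f 0) 0 := by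
  have h : HasDerivAt f (deriv f 0) (-0) := by simpa using hf.hasDerivAt
  exact (hf.hasDerivAt.sub (h.comp 0 (hasDerivAt_neg 0))).congr_deriv (by ring)

lemma exists_abs_sub_taylor_le_of_eq_zero {F : ℝ → ℝ} {δ : ℝ} (hδ : 0 < δ) {m : ℕ}
    (hF : ContDiffOn ℝ (m + 1) F (Icc 0 δ)) (hF0 : F 0 = 0) :
    ∃ M, ∀ t ∈ Icc 0 δ, |F t - ∑ j ∈ Finset.range m,
      iteratedDerivWithin (j + 1) F (Icc 0 δ) 0 / (j + 1).factorial * t ^ (j + 1)| ≤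
        M * t ^ (m + 1) := by
  obtain ⟨M, hM⟩ := exists_taylor_mean_remainder_bound hδ.le hF
  refine ⟨M, fun t ht => ?_⟩
  have h := hM t ht
  rw [taylor_within_apply, Finset.sum_range_succ', iteratedDerivWithin_zero, hF0,
    Real.norm_eq_abs] at h
  simp only [sub_zero, smul_eq_mul, mul_zero, add_zero] at h
  convert h using 3
  exact Finset.sum_congr rfl fun j _ => by ring

lemma exists_abs_sub_comp_neg_sub_taylor_le {f : ℝ → ℝ} {V : Set ℝ} (hV : IsOpen V)
    (h0V : (0 : ℝ) ∈ V) (hf : ContDiffOn ℝ (⊤ : ℕ∞) f V) (m : ℕ) :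
    ∃ δ > 0, ∃ c : ℕ → ℝ, ∃ M, c 0 = 2 * deriv f 0 ∧
      ContinuousOn (fun t => f t - f (-t)) (Icc 0 δ) ∧
      ∀ t ∈ Icc 0 δ, |f t - f (-t) - ∑ j ∈ Finset.range m, c j * t ^ (j + 1)| ≤
        M * t ^ (m + 1) := by
  obtain ⟨r, hr, hrV⟩ := Metric.isOpen_iff.1 hV 0 h0V
  have hIccV : ∀ t ∈ Icc 0 (r / 2), t ∈ V ∧ -t ∈ V := fun t ⟨ht0, htr⟩ => by
    have : |t| < r := by rw [abs_of_nonneg ht0]; linarith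
    exact ⟨hrV (by simpa using this), hrV (by simpa using this)⟩
  have hF : ContDiffOn ℝ (⊤ : ℕ∞) (fun t => f t - f (-t)) (Icc 0 (r / 2)) :=
    (hf.mono fun t ht => (hIccV t ht).1).sub
      (hf.comp contDiff_neg.contDiffOn fun t ht => (hIccV t ht).2)
  obtain ⟨M, hM⟩ := exists_abs_sub_taylor_le_of_eq_zero (half_pos hr) (m := m)
    (hF.of_le (by exact_mod_cast le_top)) (by simp)
  have hd : DifferentiableAt ℝ f 0 := (hf.contDiffAt (hV.mem_nhds h0V)).differentiableAt (by simp)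
  refine ⟨r / 2, half_pos hr, _, M, ?_, hF.continuousOn, hM⟩
  simpa using (hasDerivAt_sub_comp_neg hd).hasDerivWithinAt.derivWithin
    (uniqueDiffOn_Icc (half_pos hr) 0 ⟨le_rfl, (half_pos hr).le⟩)

lemma eqOn_sub_comp_neg_mul_mollifierTrace {n : ℕ} {ε ρ δ : ℝ} {φ f χ : ℝ → ℝ} (hn : n ≠ 0)
    (hε : 0 < ε) (hρ : 1 ≤ ρ) (hφρ : ∀ s, ρ ≤ s → φ s = 0) (hρε : ρ * ε ≤ δ)
    (hχ : ∀ t, |t| < δ → χ t = 1) :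
    EqOn (fun t => χ t * f t * (ε ^ n)⁻¹ * φ (|t| ^ n / ε ^ n) -
        χ (-t) * f (-t) * (ε ^ n)⁻¹ * φ (|(-t)| ^ n / ε ^ n))
      (fun t => mollifierTrace n ε φ t * (f t - f (-t))) (Ioi 0) := by
  intro t (ht : 0 < t)
  simp only [abs_neg, abs_of_pos ht, mollifierTrace]
  rcases lt_or_ge t (ρ * ε) with htρ | htρ
  · have hχt : |t| < δ := by rw [abs_of_pos ht]; linarith
    rw [hχ t hχt, hχ (-t) (by rwa [abs_neg])]
    ring
  · rw [comp_pow_div_pow_eq_zero hn hε hρ hφρ htρ]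
    ring

theorem principal_value_pairing_asymptotics_general
    (n : ℕ) (hn : 1 ≤ n) (q : ℕ)
    (φ₁ : ℝ → ℝ) (hφ₁ : ContDiff ℝ (⊤ : ℕ∞) φ₁) (hφ₁supp : HasCompactSupport φ₁)
    (hφ₁mom : ∀ j : ℕ, j ≤ q →
      (∫ s in Set.Ioi (0 : ℝ), s ^ ((j : ℝ) / n) * φ₁ s) =
        if j = 0 then n / sphereArea n else 0)
    (V : Set ℝ) (hV : IsOpen V) (h0V : (0 : ℝ) ∈ V)
    (f : ℝ → ℝ) (hf : ContDiffOn ℝ (⊤ : ℕ∞) f V)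
    (χ : ℝ → ℝ) (hχ1 : ∃ δ > (0 : ℝ), ∀ t : ℝ, |t| < δ → χ t = 1) :
    ∃ C > (0 : ℝ), ∃ ε₀ > (0 : ℝ), ∀ ε ∈ Set.Ioc (0 : ℝ) ε₀, ∃ L : ℝ,
      Filter.Tendsto (fun δ : ℝ => ∫ t in Set.Ioi δ,
          (t : ℝ) ^ ((n : ℤ) - 2) *
            ((χ t * f t * (ε ^ n)⁻¹ * φ₁ (|t| ^ n / ε ^ n)) -
              (χ (-t) * f (-t) * (ε ^ n)⁻¹ * φ₁ (|(-t)| ^ n / ε ^ n))))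
        (nhdsWithin 0 (Set.Ioi 0)) (nhds L) ∧
      |L - (2 / sphereArea n) * deriv f 0| ≤ C * ε ^ q := by
  have hn0 : n ≠ 0 := by omega
  obtain ⟨ρ, hρ, hφ₁ρ⟩ := hφ₁supp.exists_one_le_and_eq_zero_of_le
  obtain ⟨B, hB⟩ := hφ₁supp.exists_bound_of_continuous hφ₁.continuous
  obtain ⟨δχ, hδχ, hχ⟩ := hχ1
  obtain ⟨δ, hδ, c, M, hc0, hFcont, hFc⟩ := exists_abs_sub_comp_neg_sub_taylor_le hV h0V hf (q + 1)
  set K := M * B * ρ ^ (n + q + 1)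
  refine ⟨|K| + 1, by positivity, min 1 (min δ δχ / ρ), by positivity, ?_⟩
  rintro ε ⟨hε, hεle⟩
  have hε1 : ε ≤ 1 := hεle.trans (min_le_left _ _)
  obtain ⟨hρδ, hρδχ⟩ : ρ * ε ≤ δ ∧ ρ * ε ≤ δχ := by
    rw [← le_min_iff, mul_comm, ← le_div_iff₀ (by positivity)]
    exact hεle.trans (min_le_right _ _)
  have hEq : EqOn _ (fun t => t ^ ((n : ℤ) - 2) * (mollifierTrace n ε φ₁ t * (f t - f (-t))))
      (Ioi 0) := fun t ht => congrArg (t ^ ((n : ℤ) - 2) * ·)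
    (eqOn_sub_comp_neg_mul_mollifierTrace hn0 hε hρ hφ₁ρ hρδχ hχ ht)
  obtain ⟨hint, hle⟩ := integrableOn_Ioi_and_abs_integral_zpow_mul_mollifierTrace_sub_le hn0 hε
    hφ₁.continuous hρ hφ₁ρ hB hφ₁mom (μ := n / sphereArea n)
    (hFcont.mono fun t ht => ⟨ht.1.le, ht.2.trans hρδ⟩)
    (fun t ht => hFc t ⟨ht.1.le, ht.2.trans hρδ⟩)
  rw [hc0, ← setIntegral_congr_fun measurableSet_Ioi hEq] at hle
  replace hint := hint.congr_fun hEq.symm measurableSet_Ioi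
  refine ⟨_, (hint.continuousWithinAt_Ici_primitive_Ioi.mono Ioi_subset_Ici_self).tendsto, ?_⟩
  have hpow : ε ^ (q + 1) ≤ ε ^ q := pow_le_pow_of_le_one hε.le hε1 (Nat.le_succ q)
  calc _ = |(∫ t in Ioi 0, _) - 2 * deriv f 0 * (n / sphereArea n) / n| := by
        congr 2
        field_simp
    _ ≤ K * ε ^ (q + 1) := hle
    _ ≤ (|K| + 1) * ε ^ q := by
        nlinarith [mul_le_mul_of_nonneg_right (le_abs_self K) (pow_pos hε (q + 1)).le,
          mul_le_mul_of_nonneg_left hpow (abs_nonneg K), pow_pos hε q]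

/-- Let `P` be the distribution
`⟨P, ω⟩ = lim_{δ→0} ∫_δ^∞ t^{n−2}(ω(t) − ω(−t)) dt` (for `n = 1` the principal value of `1/t`,
for `n ≥ 2` the function `sign(t)|t|^{n−2}`), `f` smooth near `0`, `χ` a bump function equal to
`1` near `0`, and `φ₁` a mollifier profile with `∫₀^∞ s^{j/n} φ₁(s) ds = n/ωₙ` for `j = 0` and
`= 0` for `1 ≤ j ≤ q`.  Then for `ε → 0`,
`⟨P, χ·f·ε^{−n}φ₁(tⁿ/εⁿ)⟩ = (2/ωₙ)·f'(0) + O(ε^q)`. -/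
theorem principal_value_pairing_asymptotics
    (n : ℕ) (hn : 1 ≤ n) (q : ℕ)
    (φ₁ : ℝ → ℝ) (hφ₁ : ContDiff ℝ (⊤ : ℕ∞) φ₁) (hφ₁supp : HasCompactSupport φ₁)
    (hφ₁const : ∃ δ > (0 : ℝ), ∀ s : ℝ, |s| < δ → φ₁ s = φ₁ 0)
    (hφ₁mom : ∀ j : ℕ, j ≤ q →
      (∫ s in Set.Ioi (0 : ℝ), s ^ ((j : ℝ) / n) * φ₁ s) =
        if j = 0 then n / sphereArea n else 0)
    (V : Set ℝ) (hV : IsOpen V) (h0V : (0 : ℝ) ∈ V)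
    (f : ℝ → ℝ) (hf : ContDiffOn ℝ (⊤ : ℕ∞) f V)
    (χ : ℝ → ℝ) (hχ : ContDiff ℝ (⊤ : ℕ∞) χ) (hχsupp : HasCompactSupport χ)
    (hχV : tsupport χ ⊆ V) (hχ1 : ∃ δ > (0 : ℝ), ∀ t : ℝ, |t| < δ → χ t = 1) :
    ∃ C > (0 : ℝ), ∃ ε₀ > (0 : ℝ), ∀ ε ∈ Set.Ioc (0 : ℝ) ε₀, ∃ L : ℝ,
      Filter.Tendsto (fun δ : ℝ => ∫ t in Set.Ioi δ,
          (t : ℝ) ^ ((n : ℤ) - 2) *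
            ((χ t * f t * (ε ^ n)⁻¹ * φ₁ (|t| ^ n / ε ^ n)) -
              (χ (-t) * f (-t) * (ε ^ n)⁻¹ * φ₁ (|(-t)| ^ n / ε ^ n))))
        (nhdsWithin 0 (Set.Ioi 0)) (nhds L) ∧
      |L - (2 / sphereArea n) * deriv f 0| ≤ C * ε ^ q :=
  principal_value_pairing_asymptotics_general n hn q φ₁ hφ₁ hφ₁supp hφ₁mom V hV h0V f hf χ hχ1
end
end

section
/- Let t be a continuous function on an open set U' ⊆ ℝⁿ and let f ∈ C^∞(U' × U'). Let φ ∈ D(ℝⁿ) with ∫φ = 1 and vanishing moments of orders 1 through k. Then for every compact K ⊆ U', sup_{x∈K} |∫ (f(x,y) − f(x,x))·ε^{−n}φ((y−x)/ε) dy| = O(ε^{k+1}) as ε → 0. -/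
/-!
After the substitution `y = x + ε • z` the integral becomes
`∫ (f (x, x + ε • z) - f (x, x)) φ z dz`. Expand `y ↦ f (x, y)` by Taylor's formula of order `k`
at `x`: the terms of orders `1, …, k` are homogeneous polynomials in `ε • z`, so they integrate to
zero against `φ` by the moment conditions, while the Lagrange remainder is at most
`M (ε R) ^ (k + 1) / (k + 1)!` on `supp φ ⊆ closedBall 0 R`, where `M` bounds the `(k + 1)`-st
derivatives of `f` on `K × L` for a compact neighbourhood `L ⊆ U'` of `K`.
-/

open MeasureTheory Set Metric

section IteratedDeriv

variable {𝕜 : Type*} [NontriviallyNormedField 𝕜] {E F G : Type*}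
  [NormedAddCommGroup E] [NormedSpace 𝕜 E] [NormedAddCommGroup F] [NormedSpace 𝕜 F]
  [NormedAddCommGroup G] [NormedSpace 𝕜 G] {n : WithTop ℕ∞}

theorem iteratedFDeriv_comp_const_add_clm {f : E → F} {V : Set E} (hV : IsOpen V)
    (hf : ContDiffOn 𝕜 n f V) (p : E) (A : G →L[𝕜] E) {v : G} (hv : p + A v ∈ V) {i : ℕ}
    (hi : i ≤ n) :
    iteratedFDeriv 𝕜 i (fun u => f (p + A u)) v =
      (iteratedFDeriv 𝕜 i f (p + A v)).compContinuousLinearMap fun _ => A := by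
  have hV' : IsOpen ((p + ·) ⁻¹' V) := hV.preimage (continuous_const.add continuous_id)
  have hfp : ContDiffOn 𝕜 n (fun u => f (p + u)) ((p + ·) ⁻¹' V) :=
    hf.comp (contDiff_const.add contDiff_id).contDiffOn fun _ hu => hu
  have key := A.iteratedFDerivWithin_comp_right hfp hV'.uniqueDiffOn
    (hV'.preimage A.continuous).uniqueDiffOn hv hi
  rwa [iteratedFDerivWithin_of_isOpen i (hV'.preimage A.continuous) hv,
    iteratedFDerivWithin_of_isOpen i hV' hv, iteratedFDeriv_comp_add_left] at key

theorem iteratedDeriv_comp_add_smul {f : E → F} {V : Set E} (hV : IsOpen V)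
    (hf : ContDiffOn 𝕜 n f V) (p w : E) {s : 𝕜} (hs : p + s • w ∈ V) {i : ℕ} (hi : i ≤ n) :
    iteratedDeriv i (fun t => f (p + t • w)) s =
      iteratedFDeriv 𝕜 i f (p + s • w) (fun _ => w) := by
  have key := iteratedFDeriv_comp_const_add_clm hV hf p
    ((ContinuousLinearMap.id 𝕜 𝕜).smulRight w) hs hi
  simpa [iteratedDeriv_eq_iteratedFDeriv] using congr($key fun _ => 1)

theorem norm_iteratedFDeriv_comp_prodMk_le {f : E × F → G} {V : Set (E × F)} (hV : IsOpen V)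
    (hf : ContDiffOn 𝕜 n f V) (x : E) {y : F} (hy : (x, y) ∈ V) {i : ℕ} (hi : i ≤ n) :
    ‖iteratedFDeriv 𝕜 i (fun y => f (x, y)) y‖ ≤ ‖iteratedFDeriv 𝕜 i f (x, y)‖ := by
  have key := iteratedFDeriv_comp_const_add_clm hV hf (x, 0) (ContinuousLinearMap.inr 𝕜 E F)
    (by simpa using hy) hi
  simp only [ContinuousLinearMap.inr_apply, Prod.mk_add_mk, add_zero, zero_add] at key
  rw [key]
  refine (ContinuousMultilinearMap.norm_compContinuousLinearMap_le _ _).trans ?_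
  exact mul_le_of_le_one_right (norm_nonneg _) (Finset.prod_le_one (fun _ _ => norm_nonneg _)
    fun _ _ => ContinuousLinearMap.norm_inr_le_one 𝕜 E F)

end IteratedDeriv

section Taylor

variable {E : Type*} [NormedAddCommGroup E] [NormedSpace ℝ E]

noncomputable def taylorSum (f : E → ℝ) (k : ℕ) (p w : E) : ℝ :=
  ∑ j ∈ Finset.range (k + 1), (j.factorial : ℝ)⁻¹ * iteratedFDeriv ℝ j f p (fun _ => w)

theorem abs_sub_taylorSum_le {f : E → ℝ} {V : Set E} (hV : IsOpen V) {k : ℕ}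
    (hf : ContDiffOn ℝ (k + 1) f V) (p w : E) (hseg : ∀ s ∈ Icc (0 : ℝ) 1, p + s • w ∈ V)
    {M : ℝ} (hM : ∀ s ∈ Icc (0 : ℝ) 1, ‖iteratedFDeriv ℝ (k + 1) f (p + s • w)‖ ≤ M) :
    |f (p + w) - taylorSum f k p w| ≤ M * ‖w‖ ^ (k + 1) / (k + 1).factorial := by
  set S := {s : ℝ | p + s • w ∈ V}
  have hS : IsOpen S := hV.preimage (by fun_prop)
  have hu : ContDiffOn ℝ (k + 1) (fun s : ℝ => f (p + s • w)) S :=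
    hf.comp (by fun_prop : ContDiff ℝ _ fun s : ℝ => p + s • w).contDiffOn fun _ hs => hs
  have hderiv : ∀ j ≤ k + 1, ∀ s ∈ Icc (0 : ℝ) 1,
      iteratedDeriv j (fun s : ℝ => f (p + s • w)) s
        = iteratedFDeriv ℝ j f (p + s • w) (fun _ => w) :=
    fun j hj s hs => iteratedDeriv_comp_add_smul hV hf p w (hseg s hs) (by exact_mod_cast hj)
  obtain ⟨c, hc, hTaylor⟩ := taylor_mean_remainder_lagrange_iteratedDeriv (x₀ := 0) (x := 1)
    zero_ne_one (hu.mono (by rw [uIcc_of_le zero_le_one]; exact hseg))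
  rw [uIoo_of_le zero_le_one] at hc
  have h0 : (0 : ℝ) ∈ Icc (0 : ℝ) 1 := left_mem_Icc.2 zero_le_one
  have hpoly : taylorWithinEval (fun s : ℝ => f (p + s • w)) k (uIcc 0 1) 0 1
      = taylorSum f k p w := by
    rw [taylor_within_apply, taylorSum]
    refine Finset.sum_congr rfl fun j hj => ?_
    have hjk : j ≤ k + 1 := by simp at hj; omega
    rw [uIcc_of_le zero_le_one, iteratedDerivWithin_eq_iteratedDeriv (uniqueDiffOn_Icc one_pos)
      ((hu.contDiffAt (hS.mem_nhds (hseg 0 h0))).of_le (by exact_mod_cast hjk)) h0,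
      hderiv j hjk 0 h0]
    simp
  rw [hpoly, hderiv (k + 1) le_rfl c (Ioo_subset_Icc_self hc)] at hTaylor
  simp only [one_smul, sub_zero, one_pow, mul_one] at hTaylor
  rw [hTaylor, abs_div, Nat.abs_cast]
  gcongr
  calc |iteratedFDeriv ℝ (k + 1) f (p + c • w) (fun _ => w)|
      ≤ ‖iteratedFDeriv ℝ (k + 1) f (p + c • w)‖ * ∏ _ : Fin (k + 1), ‖w‖ :=
        (iteratedFDeriv ℝ (k + 1) f (p + c • w)).le_opNorm _
    _ ≤ M * ‖w‖ ^ (k + 1) := by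
        rw [Finset.prod_const, Finset.card_univ, Fintype.card_fin]
        gcongr
        exact hM c (Ioo_subset_Icc_self hc)

end Taylor

theorem abs_integral_mul_le_of_abs_sub_le {α : Type*} [MeasurableSpace α] {μ : Measure α}
    {F Q φ : α → ℝ} {c : ℝ} (hF : Integrable (fun z => F z * φ z) μ)
    (hQ : Integrable (fun z => Q z * φ z) μ) (hQ0 : ∫ z, Q z * φ z ∂μ = 0)
    (hφ : Integrable φ μ) (hc : ∀ z ∈ Function.support φ, |F z - Q z| ≤ c) :
    |∫ z, F z * φ z ∂μ| ≤ c * ∫ z, |φ z| ∂μ := by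
  have hsub : ∫ z, F z * φ z ∂μ = ∫ z, (F z - Q z) * φ z ∂μ := by
    simp_rw [sub_mul]
    rw [integral_sub hF hQ, hQ0, sub_zero]
  rw [hsub, ← integral_const_mul, ← Real.norm_eq_abs]
  refine norm_integral_le_of_norm_le (hφ.abs.const_mul c) (ae_of_all _ fun z => ?_)
  by_cases hz : φ z = 0
  · simp [hz]
  · rw [norm_mul, Real.norm_eq_abs, Real.norm_eq_abs]
    exact mul_le_mul_of_nonneg_right (hc z hz) (abs_nonneg _)

theorem integral_mul_inv_pow_smul_sub {E : Type*} [NormedAddCommGroup E] [NormedSpace ℝ E]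
    [FiniteDimensional ℝ E] [MeasurableSpace E] [BorelSpace E] (μ : Measure E)
    [μ.IsAddHaarMeasure] (g φ : E → ℝ) (x : E) {ε : ℝ} (hε : 0 < ε) :
    ∫ y, g y * (ε ^ Module.finrank ℝ E)⁻¹ * φ (ε⁻¹ • (y - x)) ∂μ
      = ∫ z, g (x + ε • z) * φ z ∂μ := by
  have hscale := Measure.integral_comp_smul μ (fun v => g (x + v) * φ (ε⁻¹ • v)) ε
  simp only [smul_smul, inv_mul_cancel₀ hε.ne', one_smul] at hscale
  rw [hscale, abs_of_pos (by positivity), smul_eq_mul, ← integral_const_mul,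
    ← integral_add_left_eq_self _ x]
  simp only [add_sub_cancel_left]
  congr 1 with y
  ring

section Moments

variable {n k : ℕ} {φ : EuclideanSpace ℝ (Fin n) → ℝ}

def HasVanishingMoments (φ : EuclideanSpace ℝ (Fin n) → ℝ) (k : ℕ) : Prop :=
  ∀ α : Fin n → ℕ, 1 ≤ ∑ i, α i → ∑ i, α i ≤ k → ∫ x, (∏ i, x i ^ α i) * φ x = 0

open Finset in
theorem ContinuousMultilinearMap.apply_diag_eq_sum_monomial {j : ℕ}
    (T : ContinuousMultilinearMap ℝ (fun _ : Fin j => EuclideanSpace ℝ (Fin n)) ℝ)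
    (z : EuclideanSpace ℝ (Fin n)) :
    T (fun _ => z) = ∑ r : Fin j → Fin n,
      T (fun m => EuclideanSpace.single (r m) 1) * ∏ i, z i ^ #{m | r m = i} := by
  classical
  conv_lhs => rw [← (EuclideanSpace.basisFun (Fin n) ℝ).sum_repr z, T.map_sum]
  refine Finset.sum_congr rfl fun r _ => ?_
  rw [T.map_smul_univ, smul_eq_mul, mul_comm, ← Finset.prod_fiberwise Finset.univ r]
  congr 1
  · simp
  · refine Finset.prod_congr rfl fun i _ => ?_
    rw [Finset.prod_congr rfl fun m hm => by rw [(Finset.mem_filter.1 hm).2], Finset.prod_const]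
    simp

open Finset in
theorem integral_apply_diag_mul_eq_zero (hφ : Continuous φ) (hφc : HasCompactSupport φ)
    (hφmom : HasVanishingMoments φ k) {j : ℕ} (hj : 1 ≤ j) (hjk : j ≤ k)
    (T : ContinuousMultilinearMap ℝ (fun _ : Fin j => EuclideanSpace ℝ (Fin n)) ℝ) :
    ∫ z, T (fun _ => z) * φ z = 0 := by
  classical
  have hdeg (r : Fin j → Fin n) : ∑ i, #{m | r m = i} = j := by
    rw [← Finset.card_eq_sum_card_fiberwise fun m _ => Finset.mem_univ (r m)]
    simp
  simp_rw [T.apply_diag_eq_sum_monomial, Finset.sum_mul, mul_assoc]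
  rw [integral_finsetSum]
  · refine Finset.sum_eq_zero fun r _ => ?_
    rw [integral_const_mul, hφmom _ (by rw [hdeg]; exact hj) (by rw [hdeg]; exact hjk), mul_zero]
  · exact fun r _ => (Continuous.integrable_of_hasCompactSupport (by fun_prop)
      hφc.mul_left).const_mul _

theorem integral_taylorSum_sub_mul_eq_zero (hφ : Continuous φ) (hφc : HasCompactSupport φ)
    (hφmom : HasVanishingMoments φ k) (g : EuclideanSpace ℝ (Fin n) → ℝ)
    (x : EuclideanSpace ℝ (Fin n)) (ε : ℝ) :
    ∫ z, (taylorSum g k x (ε • z) - g x) * φ z = 0 := by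
  have hhom (z : EuclideanSpace ℝ (Fin n)) (j : ℕ) :
      iteratedFDeriv ℝ j g x (fun _ => ε • z) = ε ^ j * iteratedFDeriv ℝ j g x (fun _ => z) := by
    simpa using (iteratedFDeriv ℝ j g x).map_smul_univ (fun _ => ε) fun _ => z
  simp only [taylorSum, Finset.sum_range_succ', hhom, Nat.factorial_zero, Nat.cast_one, inv_one,
    pow_zero, one_mul, iteratedFDeriv_zero_apply, add_sub_cancel_right, Finset.sum_mul]
  rw [integral_finsetSum]
  · refine Finset.sum_eq_zero fun j hj => ?_
    simp_rw [mul_assoc]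
    rw [integral_const_mul, integral_const_mul, integral_apply_diag_mul_eq_zero hφ hφc hφmom
      (Nat.le_add_left 1 j) (Finset.mem_range.1 hj), mul_zero, mul_zero]
  · exact fun j _ => Continuous.integrable_of_hasCompactSupport (by fun_prop) hφc.mul_left

theorem abs_integral_sub_mul_le_of_hasVanishingMoments (hφ : Continuous φ)
    (hφc : HasCompactSupport φ) (hφmom : HasVanishingMoments φ k)
    {g : EuclideanSpace ℝ (Fin n) → ℝ} {V : Set (EuclideanSpace ℝ (Fin n))} (hV : IsOpen V)
    (hg : ContDiffOn ℝ (k + 1) g V) {x : EuclideanSpace ℝ (Fin n)} {ε R M : ℝ} (hε : 0 < ε)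
    (hφR : tsupport φ ⊆ closedBall 0 R) (hxV : closedBall x (ε * R) ⊆ V)
    (hM : ∀ y ∈ closedBall x (ε * R), ‖iteratedFDeriv ℝ (k + 1) g y‖ ≤ M) :
    |∫ z, (g (x + ε • z) - g x) * φ z|
      ≤ M * (ε * R) ^ (k + 1) / (k + 1).factorial * ∫ z, |φ z| := by
  have hεz : ∀ z ∈ tsupport φ, ‖ε • z‖ ≤ ε * R := fun z hz => by
    rw [norm_smul, Real.norm_eq_abs, abs_of_pos hε]
    exact mul_le_mul_of_nonneg_left (mem_closedBall_zero_iff.1 (hφR hz)) hε.le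
  have hseg : ∀ z ∈ tsupport φ, ∀ s ∈ Icc (0 : ℝ) 1, x + s • ε • z ∈ closedBall x (ε * R) := by
    intro z hz s hs
    rw [mem_closedBall, dist_self_add_left, norm_smul, Real.norm_eq_abs, abs_of_nonneg hs.1]
    exact (mul_le_of_le_one_left (norm_nonneg _) hs.2).trans (hεz z hz)
  have hremainder : ∀ z ∈ Function.support φ,
      |g (x + ε • z) - g x - (taylorSum g k x (ε • z) - g x)|
        ≤ M * (ε * R) ^ (k + 1) / (k + 1).factorial := by
    intro z hz
    replace hz := subset_tsupport φ hz
    have hM0 : 0 ≤ M := (norm_nonneg _).trans (hM _ (hseg z hz 0 (left_mem_Icc.2 zero_le_one)))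
    rw [sub_sub_sub_cancel_right]
    refine (abs_sub_taylorSum_le hV hg x (ε • z) (fun s hs => hxV (hseg z hz s hs))
      fun s hs => hM _ (hseg z hz s hs)).trans ?_
    gcongr
    exact hεz z hz
  have hW : IsOpen {z | x + ε • z ∈ V} := hV.preimage (by fun_prop)
  have hφW : tsupport φ ⊆ {z | x + ε • z ∈ V} := fun z hz =>
    hxV (by simpa using hseg z hz 1 (right_mem_Icc.2 zero_le_one))
  have hcont : Continuous fun z => (g (x + ε • z) - g x) * φ z :=
    (((hg.continuousOn.comp (by fun_prop : Continuous fun z => x + ε • z).continuousOn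
      fun _ h => h).sub continuousOn_const).mul hφ.continuousOn).continuous_of_tsupport_subset
      hW (tsupport_mul_subset_right.trans hφW)
  exact abs_integral_mul_le_of_abs_sub_le (hcont.integrable_of_hasCompactSupport hφc.mul_left)
    (Continuous.integrable_of_hasCompactSupport (by fun_prop [taylorSum]) hφc.mul_left)
    (integral_taylorSum_sub_mul_eq_zero hφ hφc hφmom g x ε)
    (hφ.integrable_of_hasCompactSupport hφc) hremainder

end Moments

theorem exists_bound_iteratedFDeriv_comp_prodMk {E F : Type*} [NormedAddCommGroup E]
    [NormedSpace ℝ E] [ProperSpace E] [NormedAddCommGroup F] [NormedSpace ℝ F] {U : Set E}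
    (hU : IsOpen U) {f : E × E → F} {m : ℕ} (hf : ContDiffOn ℝ m f (U ×ˢ U)) {K : Set E}
    (hK : IsCompact K) (hKU : K ⊆ U) :
    ∃ δ > 0, ∃ M ≥ 0, ∀ x ∈ K, closedBall x δ ⊆ U ∧
      ∀ y ∈ closedBall x δ, ‖iteratedFDeriv ℝ m (fun y => f (x, y)) y‖ ≤ M := by
  obtain ⟨δ, hδ, hδU⟩ := hK.exists_thickening_subset_open hU hKU
  have hLU : cthickening (δ / 2) K ⊆ U :=
    (cthickening_subset_thickening' hδ (half_lt_self hδ) K).trans hδU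
  have hcont : ContinuousOn (iteratedFDeriv ℝ m f) (U ×ˢ U) :=
    (hf.continuousOn_iteratedFDerivWithin le_rfl (hU.prod hU).uniqueDiffOn).congr
      fun q hq => (iteratedFDerivWithin_of_isOpen m (hU.prod hU) hq).symm
  obtain ⟨M, hM⟩ := (hK.prod hK.cthickening).exists_bound_of_continuousOn
    (hcont.mono (prod_mono hKU hLU))
  refine ⟨δ / 2, half_pos hδ, max M 0, le_max_right _ _, fun x hx =>
    ⟨(closedBall_subset_cthickening hx _).trans hLU, fun y hy => ?_⟩⟩
  replace hy := closedBall_subset_cthickening hx _ hy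
  calc ‖iteratedFDeriv ℝ m (fun y => f (x, y)) y‖ ≤ ‖iteratedFDeriv ℝ m f (x, y)‖ :=
        norm_iteratedFDeriv_comp_prodMk_le (hU.prod hU) hf x ⟨hKU hx, hLU hy⟩ le_rfl
    _ ≤ M := hM _ ⟨hx, hy⟩
    _ ≤ max M 0 := le_max_left _ _

theorem smoothing_kernel_taylor_estimate_general
    {n : ℕ} (U' : Set (EuclideanSpace ℝ (Fin n))) (hU' : IsOpen U')
    (f : EuclideanSpace ℝ (Fin n) × EuclideanSpace ℝ (Fin n) → ℝ)
    (hf : ContDiffOn ℝ (⊤ : ℕ∞) f (U' ×ˢ U'))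
    (k : ℕ) (φ : EuclideanSpace ℝ (Fin n) → ℝ)
    (hφ : ContDiff ℝ (⊤ : ℕ∞) φ) (hφc : HasCompactSupport φ)
    (hφmom : ∀ α : Fin n → ℕ, 1 ≤ ∑ i, α i → ∑ i, α i ≤ k →
      (∫ x, (∏ i, x i ^ α i) * φ x) = 0)
    (K : Set (EuclideanSpace ℝ (Fin n))) (hK : IsCompact K) (hKU : K ⊆ U') :
    ∃ C > (0 : ℝ), ∃ ε₀ > (0 : ℝ), ∀ ε ∈ Set.Ioc (0 : ℝ) ε₀, ∀ x ∈ K,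
      |∫ y, (f (x, y) - f (x, x)) * (ε ^ n)⁻¹ * φ (ε⁻¹ • (y - x))| ≤ C * ε ^ (k + 1) := by
  have hf' : ContDiffOn ℝ (k + 1 : ℕ) f (U' ×ˢ U') := hf.of_le (by exact_mod_cast le_top)
  obtain ⟨R, hR, hφR⟩ := hφc.isBounded.subset_closedBall_lt 0 0
  obtain ⟨δ, hδ, M, hM, hbound⟩ := exists_bound_iteratedFDeriv_comp_prodMk hU' hf' hK hKU
  set B := M * R ^ (k + 1) / (k + 1).factorial * ∫ z, |φ z|
  refine ⟨B + 1, by positivity, δ / R, by positivity, ?_⟩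
  rintro ε ⟨hε, hεδ⟩ x hx
  have hball : closedBall x (ε * R) ⊆ closedBall x δ :=
    closedBall_subset_closedBall ((le_div_iff₀ hR).1 hεδ)
  obtain ⟨hxU, hxM⟩ := hbound x hx
  have hcov := integral_mul_inv_pow_smul_sub volume (fun y => f (x, y) - f (x, x)) φ x hε
  rw [finrank_euclideanSpace_fin] at hcov
  rw [hcov]
  calc _ ≤ M * (ε * R) ^ (k + 1) / (k + 1).factorial * ∫ z, |φ z| :=
        abs_integral_sub_mul_le_of_hasVanishingMoments hφ.continuous hφc hφmom hU'
          (hf'.comp (by fun_prop) fun y hy => ⟨hKU hx, hy⟩) hε hφR (hball.trans hxU)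
          fun y hy => hxM y (hball hy)
    _ = B * ε ^ (k + 1) := by rw [mul_pow]; ring
    _ ≤ (B + 1) * ε ^ (k + 1) := by gcongr; linarith

/-- Let `t` be continuous on an open `U' ⊆ ℝⁿ`, `f ∈ C^∞(U' × U')`, and let
`φ` be a test function with `∫ φ = 1` and vanishing moments of orders `1,…,k`.  Then for every
compact `K ⊆ U'`,
`sup_{x∈K} |∫ (f(x,y) − f(x,x))·ε^{−n}φ((y−x)/ε) dy| = O(ε^{k+1})` as `ε → 0`. -/
theorem smoothing_kernel_taylor_estimate
    {n : ℕ} (hn : 0 < n) (U' : Set (EuclideanSpace ℝ (Fin n))) (hU' : IsOpen U')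
    (t : EuclideanSpace ℝ (Fin n) → ℝ) (ht : ContinuousOn t U')
    (f : EuclideanSpace ℝ (Fin n) × EuclideanSpace ℝ (Fin n) → ℝ)
    (hf : ContDiffOn ℝ (⊤ : ℕ∞) f (U' ×ˢ U'))
    (k : ℕ) (φ : EuclideanSpace ℝ (Fin n) → ℝ)
    (hφ : ContDiff ℝ (⊤ : ℕ∞) φ) (hφc : HasCompactSupport φ)
    (hφint : (∫ x, φ x) = 1)
    (hφmom : ∀ α : Fin n → ℕ, 1 ≤ ∑ i, α i → ∑ i, α i ≤ k →
      (∫ x, (∏ i, x i ^ α i) * φ x) = 0)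
    (K : Set (EuclideanSpace ℝ (Fin n))) (hK : IsCompact K) (hKU : K ⊆ U') :
    ∃ C > (0 : ℝ), ∃ ε₀ > (0 : ℝ), ∀ ε ∈ Set.Ioc (0 : ℝ) ε₀, ∀ x ∈ K,
      |∫ y, (f (x, y) - f (x, x)) * (ε ^ n)⁻¹ * φ (ε⁻¹ • (y - x))| ≤ C * ε ^ (k + 1) :=
  smoothing_kernel_taylor_estimate_general U' hU' f hf k φ hφ hφc hφmom K hK hKU
end
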